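/- arXiv:1403.0385 — 3 statements merged into one kernel-verified Lean document; each statement's English description precedes it below -/
import Mathlib

section
/- Let U be a closed set of Lyndon words. The map Υ(U) → L sending (u, v) to the concatenation uv is injective, and its image is contained in Φ(U), the set of Lyndon words not in U all of whose proper Lyndon factors lie in U. -/
set_option linter.unusedSectionVars false
set_option linter.unusedVariables false


variable {X : Type*} [LinearOrder X]

/-- The lexicographical order of the paper: `u <_lex v` iff the words first differ with the
letter of `u` smaller, or `v` is a proper prefix of `u`. -/
def LexLt (u v : List X) : Prop :=
  (∃ (r s t : List X) (a b : X), a < b ∧ u = r ++ a :: s ∧ v = r ++ b :: t) ∨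
    (v <+: u ∧ v ≠ u)

/-- A word `u` is Lyndon if it is nonempty and `u >_lex w ++ v` for every factorization
`u = v ++ w` with `v, w` nonempty. -/
def IsLyndon (u : List X) : Prop :=
  u ≠ [] ∧ ∀ v w : List X, u = v ++ w → v ≠ [] → w ≠ [] → LexLt (w ++ v) u

/-- A set `U` of Lyndon words is closed if it contains all letters and every Lyndon factor
of a word in `U`. -/
def IsClosedSet (U : Set (List X)) : Prop :=
  (∀ u ∈ U, IsLyndon u) ∧ (∀ a : X, [a] ∈ U) ∧
    ∀ w ∈ U, ∀ v : List X, IsLyndon v → v <:+: w → v ∈ U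

/-- `Φ(U)`: Lyndon words not in `U` all of whose proper Lyndon factors lie in `U`. -/
def Phi (U : Set (List X)) : Set (List X) :=
  {v | IsLyndon v ∧ v ∉ U ∧ ∀ w : List X, IsLyndon w → w <:+: v → w ≠ v → w ∈ U}

/-- `Υ(U)`: pairs `u >_lex v` of elements of `U` with no element of `U` strictly between. -/
def Upsilon (U : Set (List X)) : Set (List X × List X) :=
  {p | p.1 ∈ U ∧ p.2 ∈ U ∧ LexLt p.2 p.1 ∧ ¬∃ w ∈ U, LexLt p.2 w ∧ LexLt w p.1}

section OrderInfra

local instance : IsStrictTotalOrder X (· > ·) where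
  trichotomous a b := by
    intro h1 h2
    rcases lt_trichotomy b a with h | h | h
    · exact absurd h h1
    · exact h.symm
    · exact absurd h h2
  irrefl a h := lt_irrefl a h
  trans a b c h1 h2 := lt_trans h2 h1

private theorem lex_of_prefix {v d : List X} (hd : d ≠ []) :
    List.Lex (α := X) (· > ·) v (v ++ d) := by
  induction v with
  | nil => cases d with
    | nil => exact absurd rfl hd
    | cons e d' => exact List.Lex.nil
  | cons c v ih => exact List.Lex.cons ih

theorem lexLt_iff_lex {u v : List X} : LexLt u v ↔ List.Lex (· > ·) v u := by
  constructor
  · rintro (⟨r, s, t, a, b, hab, rfl, rfl⟩ | ⟨⟨d, rfl⟩, hne⟩)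
    · induction r with
      | nil => exact List.Lex.rel hab
      | cons c r ih => exact List.Lex.cons ih
    · apply lex_of_prefix
      rintro rfl
      exact hne (by simp)
  · intro h
    induction h with
    | @nil a l => exact Or.inr ⟨⟨a :: l, rfl⟩, by simp⟩
    | @rel a₁ l₁ a₂ l₂ h => exact Or.inl ⟨[], l₂, l₁, a₂, a₁, h, rfl, rfl⟩
    | @cons a l₁ l₂ h ih =>
      rcases ih with ⟨r, s, t, x, y, hxy, h1, h2⟩ | ⟨⟨d, hd⟩, hne⟩
      · exact Or.inl ⟨a :: r, s, t, x, y, hxy, by rw [h1]; rfl, by rw [h2]; rfl⟩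
      · exact Or.inr ⟨⟨d, by rw [← hd]; rfl⟩, by simpa using hne⟩

theorem lexLt_irrefl (u : List X) : ¬ LexLt u u := by
  rw [lexLt_iff_lex]
  exact irrefl_of (List.Lex (· > ·)) u

theorem lexLt_asymm {u v : List X} (h : LexLt u v) (h' : LexLt v u) : False := by
  rw [lexLt_iff_lex] at h h'
  exact asymm_of (List.Lex (· > ·)) h h'

theorem lexLt_trans {u v w : List X} (h : LexLt u v) (h' : LexLt v w) : LexLt u w := by
  rw [lexLt_iff_lex] at *
  exact List.lex_trans (fun h1 h2 => lt_trans h2 h1) h' h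

theorem lexLt_trichot (u v : List X) : LexLt u v ∨ u = v ∨ LexLt v u := by
  rcases trichotomous_of (List.Lex (· > ·)) v u with h | h | h
  · exact Or.inl (lexLt_iff_lex.2 h)
  · exact Or.inr (Or.inl h.symm)
  · exact Or.inr (Or.inr (lexLt_iff_lex.2 h))

end OrderInfra

/-- N2 : a proper prefix is greater. -/
theorem prefix_lexLt {p q : List X} (h : p <+: q) (hne : p ≠ q) : LexLt q p :=
  Or.inr ⟨h, hne⟩

/-- diff-only: if the smaller word is strictly shorter, the comparison is by a first difference. -/
theorem lexLt_diff {x y : List X} (h : LexLt x y) (hlen : x.length < y.length) :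
    ∃ (r α β : List X) (a b : X), a < b ∧ x = r ++ a :: α ∧ y = r ++ b :: β := by
  rcases h with ⟨r, α, β, a, b, hab, h1, h2⟩ | ⟨hpre, _⟩
  · exact ⟨r, α, β, a, b, hab, h1, h2⟩
  · exact absurd hpre.length_le (by omega)

/-- N3 : a first-difference comparison survives appending anything. -/
theorem diff_lexLt_append {r α β : List X} {a b : X} (hab : a < b) (x y : List X) :
    LexLt ((r ++ a :: α) ++ x) ((r ++ b :: β) ++ y) :=
  Or.inl ⟨r, α ++ x, β ++ y, a, b, hab, by simp, by simp⟩

/-- N5 : left-cancellation. -/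
theorem lexLt_append_left_iff {w x y : List X} : LexLt (w ++ x) (w ++ y) ↔ LexLt x y := by
  constructor
  · intro h
    rcases lexLt_trichot x y with h' | rfl | h'
    · exact h'
    · exact absurd h (lexLt_irrefl _)
    · rcases h' with ⟨r, α, β, a, b, hab, h1, h2⟩ | ⟨hpre, hne⟩
      · exfalso
        refine lexLt_asymm h (Or.inl ⟨w ++ r, α, β, a, b, hab, ?_, ?_⟩)
        · rw [h1]; simp
        · rw [h2]; simp
      · exfalso
        refine lexLt_asymm h (Or.inr ⟨?_, ?_⟩)
        · exact (List.prefix_append_right_inj w).2 hpre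
        · intro hh
          exact hne (List.append_cancel_left hh)
  · intro h
    rcases h with ⟨r, α, β, a, b, hab, h1, h2⟩ | ⟨hpre, hne⟩
    · exact Or.inl ⟨w ++ r, α, β, a, b, hab, by rw [h1]; simp, by rw [h2]; simp⟩
    · refine Or.inr ⟨(List.prefix_append_right_inj w).2 hpre, ?_⟩
      intro hh
      exact hne (List.append_cancel_left hh)

/-- N1 : every proper nonempty suffix of a Lyndon word is smaller. -/
theorem lyndon_suffix {u s : List X} (hu : IsLyndon u) (hs : s <:+ u) (h0 : s ≠ [])
    (hne : s ≠ u) : LexLt s u := by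
  obtain ⟨p, hp⟩ := hs
  have hp0 : p ≠ [] := by rintro rfl; exact hne hp
  have rot1 : LexLt (s ++ p) u := hu.2 p s hp.symm hp0 h0
  rcases lexLt_trichot s u with h | rfl | h
  · exact h
  · exact absurd rfl hne
  · rcases h with ⟨r, α, β, a, b, hab, h1, h2⟩ | ⟨hpre, -⟩
    · -- u = r ++ a :: α, s = r ++ b :: β, a < b : then u < s ++ p, contradiction
      exfalso
      refine lexLt_asymm rot1 ?_
      have : LexLt (u ++ []) ((s) ++ p) := by
        rw [h1, h2]; exact diff_lexLt_append hab [] p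
      simpa using this
    · -- s is a proper prefix of u as well : border situation
      obtain ⟨q, hq⟩ := hpre
      have hq0 : q ≠ [] := by rintro rfl; exact hne (by simpa using hq)
      have rot2 : LexLt (q ++ s) u := hu.2 s q hq.symm h0 hq0
      -- from rot1 : LexLt (s ++ p) (s ++ q), cancel
      have hpq : LexLt p q := by
        rw [← lexLt_append_left_iff (w := s)]
        rw [← hq] at rot1; exact rot1
      have hlen : p.length = q.length := by
        have l1 : u.length = p.length + s.length := by rw [← hp]; simp
        have l2 : u.length = s.length + q.length := by rw [← hq]; simp
        omega
    -- p < q with equal lengths must be a first-difference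
      rcases hpq with ⟨r, α, β, a, b, hab, h1, h2⟩ | ⟨hpre', hne'⟩
      · exfalso
        refine lexLt_asymm rot2 ?_
        have : LexLt (p ++ s) (q ++ s) := by rw [h1, h2]; exact diff_lexLt_append hab s s
        rw [hp] at this; exact this
      · exact absurd (hpre'.eq_of_length hlen.symm) hne'

/-- converse of the suffix characterization. -/
theorem lyndon_of_suffix {x : List X} (h0 : x ≠ [])
    (H : ∀ σ, σ <:+ x → σ ≠ [] → σ ≠ x → LexLt σ x) : IsLyndon x := by
  refine ⟨h0, fun v w hvw hv hw => ?_⟩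
  have hsuf : w <:+ x := ⟨v, hvw.symm⟩
  have hwx : w ≠ x := by
    intro h
    subst h
    have hl := congrArg List.length hvw
    rw [List.length_append] at hl
    have : v.length = 0 := by omega
    exact hv (List.length_eq_zero_iff.1 this)
  have hlen : w.length < x.length := by
    have := hsuf.length_le
    have hne := hwx
    rcases lt_or_eq_of_le this with h | h
    · exact h
    · exact absurd (hsuf.eq_of_length h) hne
  obtain ⟨r, α, β, a, b, hab, h1, h2⟩ := lexLt_diff (H w hsuf hw hwx) hlen
  have : LexLt (w ++ v) (x ++ []) := by rw [h1, h2]; exact diff_lexLt_append hab v []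
  simpa using this

/-- Lyndon words have no proper borders. -/
theorem lyndon_no_border {w b : List X} (hw : IsLyndon w) (h1 : b <+: w) (h2 : b <:+ w)
    (h0 : b ≠ []) (hne : b ≠ w) : False :=
  lexLt_asymm (lyndon_suffix hw h2 h0 hne) (prefix_lexLt h1 hne)

theorem lyndon_singleton (d : X) : IsLyndon [d] := by
  refine ⟨by simp, fun v w h hv hw => ?_⟩
  exfalso
  cases v with
  | nil => exact hv rfl
  | cons c v' =>
    simp only [List.cons_append, List.cons.injEq] at h
    rcases h with ⟨-, h⟩
    rcases List.append_eq_nil_iff.1 h.symm with ⟨h1, h2⟩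
    exact hw h2

/-- `rep k z = z ++ z ++ ... ++ z` (k copies). -/
def rep : ℕ → List X → List X
  | 0, _ => []
  | k + 1, z => z ++ rep k z

@[simp] theorem rep_zero (z : List X) : rep 0 z = [] := rfl

theorem rep_succ (k : ℕ) (z : List X) : rep (k + 1) z = z ++ rep k z := rfl

theorem rep_comm (k : ℕ) (z : List X) : rep k z ++ z = z ++ rep k z := by
  induction k with
  | zero => simp
  | succ k ih => rw [rep_succ, List.append_assoc, ih]

theorem rep_succ' (k : ℕ) (z : List X) : rep (k + 1) z = rep k z ++ z := by
  rw [rep_succ, ← rep_comm]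

theorem rep_add (m j : ℕ) (z : List X) : rep (m + j) z = rep m z ++ rep j z := by
  induction m with
  | zero => simp
  | succ m ih =>
    have e : m + 1 + j = (m + j) + 1 := by omega
    rw [e, rep_succ, ih, rep_succ, List.append_assoc]

theorem suffix_rep (k : ℕ) (hk : 1 ≤ k) (z : List X) : z <:+ rep k z := by
  obtain ⟨k', rfl⟩ : ∃ k', k = k' + 1 := ⟨k - 1, by omega⟩
  rw [rep_succ']
  exact List.suffix_append _ _

theorem prefix_rep (k : ℕ) (hk : 1 ≤ k) (z : List X) : z <+: rep k z := by
  obtain ⟨k', rfl⟩ : ∃ k', k = k' + 1 := ⟨k - 1, by omega⟩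
  rw [rep_succ]
  exact List.prefix_append _ _

/-- Decomposing a suffix of an append. -/
theorem suffix_append_cases {σ a b : List X} (h : σ <:+ a ++ b) :
    σ <:+ b ∨ ∃ τ, τ <:+ a ∧ σ = τ ++ b := by
  obtain ⟨ρ, hρ⟩ := h
  rcases le_or_gt a.length ρ.length with hl | hl
  · left
    have hρpre : ρ <+: a ++ b := ⟨σ, hρ⟩
    have := List.prefix_of_prefix_length_le (List.prefix_append a b) hρpre hl
    obtain ⟨ρ', rfl⟩ := this
    rw [List.append_assoc] at hρ
    exact ⟨ρ', List.append_cancel_left hρ⟩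
  · right
    have hρpre : ρ <+: a := by
      refine List.prefix_of_prefix_length_le ⟨σ, hρ⟩ (List.prefix_append a b) (le_of_lt hl)
    obtain ⟨τ, rfl⟩ := hρpre
    rw [List.append_assoc] at hρ
    exact ⟨τ, ⟨ρ, rfl⟩, (List.append_cancel_left hρ)⟩

/-- Decomposing a prefix of an append. -/
theorem prefix_append_cases {p a b : List X} (h : p <+: a ++ b) :
    p <+: a ∨ ∃ q, q <+: b ∧ p = a ++ q := by
  rcases le_or_gt p.length a.length with hl | hl
  · exact Or.inl (List.prefix_of_prefix_length_le h (List.prefix_append a b) hl)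
  · right
    have : a <+: p := List.prefix_of_prefix_length_le (List.prefix_append a b) h (le_of_lt hl)
    obtain ⟨q, rfl⟩ := this
    obtain ⟨r, hr⟩ := h
    rw [List.append_assoc] at hr
    exact ⟨q, ⟨r, List.append_cancel_left hr⟩, rfl⟩

/-- Decomposing a suffix of `rep k z ++ y`. -/
theorem suffix_rep_cases {σ y z : List X} {k : ℕ} (h : σ <:+ rep k z ++ y) :
    σ <:+ y ∨ ∃ m τ, m < k ∧ τ <:+ z ∧ σ = τ ++ (rep m z ++ y) := by
  induction k generalizing σ with
  | zero =>
    left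
    simpa using h
  | succ k ih =>
    rw [rep_succ, List.append_assoc] at h
    rcases suffix_append_cases h with h' | ⟨τ, hτ, rfl⟩
    · rcases ih h' with h'' | ⟨m, τ, hm, hτ, rfl⟩
      · exact Or.inl h''
      · exact Or.inr ⟨m, τ, by omega, hτ, rfl⟩
    · exact Or.inr ⟨k, τ, by omega, hτ, rfl⟩

/-- Euclidean extraction of a prefix of `rep k z ++ zb`. -/
theorem prefix_rep_cases {p zb z : List X} {k : ℕ} (hz : z ≠ []) (hzb : zb <+: z) (hne : zb ≠ z)
    (h : p <+: rep k z ++ zb) :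
    ∃ m ρ, ρ <+: z ∧ ρ ≠ z ∧ p = rep m z ++ ρ := by
  induction k generalizing p with
  | zero =>
    simp only [rep_zero, List.nil_append] at h
    refine ⟨0, p, h.trans hzb, ?_, by simp⟩
    intro hpz
    subst hpz
    have h1 := h.length_le
    have h2 := hzb.length_le
    exact hne (hzb.eq_of_length (by omega))
  | succ k ih =>
    rw [rep_succ, List.append_assoc] at h
    rcases prefix_append_cases h with h' | ⟨q, hq, rfl⟩
    · by_cases hpz : p = z
      · subst hpz
        exact ⟨1, [], List.nil_prefix, Ne.symm hz, by simp [rep_succ]⟩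
      · exact ⟨0, p, h', hpz, by simp⟩
    · obtain ⟨m, ρ, h1, h2, rfl⟩ := ih hq
      exact ⟨m + 1, ρ, h1, h2, by rw [rep_succ, List.append_assoc]⟩

/-- head-cons decomposition of a nonempty list -/
theorem exists_cons_of_ne_nil' {l : List X} (h : l ≠ []) : ∃ c l', l = c :: l' := by
  cases l with
  | nil => exact absurd rfl h
  | cons c l' => exact ⟨c, l', rfl⟩

/-- Duval's extension lemma: appending a letter smaller than the "expected" letter to a
prenecklace yields a Lyndon word. -/
theorem duval_ext {z zb η : List X} {e d : X} (hz : IsLyndon z) (hsplit : z = zb ++ e :: η)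
    (hd : d < e) {k : ℕ} (hk : 1 ≤ k) : IsLyndon (rep k z ++ (zb ++ [d])) := by
  obtain ⟨k', rfl⟩ : ∃ k', k = k' + 1 := ⟨k - 1, by omega⟩
  have hz0 : z ≠ [] := hz.1
  have hxz : rep (k' + 1) z ++ (zb ++ [d]) = z ++ (rep k' z ++ (zb ++ [d])) := by
    rw [rep_succ, List.append_assoc]
  have key : ∀ R : List X, z ++ R = zb ++ e :: (η ++ R) := by
    intro R
    rw [hsplit]
    simp
  have hxsplit : rep (k' + 1) z ++ (zb ++ [d])
      = zb ++ e :: (η ++ (rep k' z ++ (zb ++ [d]))) := hxz.trans (key _)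
  -- the "power-aligned suffix" case
  have hpow : ∀ m', m' ≤ k' →
      LexLt (rep m' z ++ (zb ++ [d])) (rep (k' + 1) z ++ (zb ++ [d])) := by
    intro m' hm'
    have hsum : k' + 1 = m' + (k' + 1 - m') := by omega
    have hdecomp : rep (k' + 1) z ++ (zb ++ [d])
        = rep m' z ++ (rep (k' + 1 - m') z ++ (zb ++ [d])) := by
      nth_rewrite 1 [hsum]
      rw [rep_add, List.append_assoc]
    rw [hdecomp, lexLt_append_left_iff]
    obtain ⟨j, hj⟩ : ∃ j, k' + 1 - m' = j + 1 := ⟨k' - m', by omega⟩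
    rw [hj, rep_succ, List.append_assoc]
    exact Or.inl ⟨zb, [], η ++ (rep j z ++ (zb ++ [d])), d, e, hd, rfl, key _⟩
  refine lyndon_of_suffix (by simp) ?_
  intro σ hσ hσ0 hσx
  rcases suffix_rep_cases hσ with hc | ⟨m, τ, hm, hτ, rfl⟩
  · -- σ is a suffix of zb ++ [d] : so σ = τ' ++ [d] with τ' a suffix of zb
    have hc2 : ∃ τ', τ' <:+ zb ∧ σ = τ' ++ [d] := by
      rcases suffix_append_cases hc with hc' | ⟨τ', hτ', rfl⟩
      · have hσd : σ = [d] := by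
          have h1 := hc'.length_le
          have h2 : σ.length ≠ 0 := fun h => hσ0 (List.length_eq_zero_iff.1 h)
          exact hc'.eq_of_length (by simp at h1 ⊢; omega)
        exact ⟨[], List.nil_suffix, by rw [hσd]; simp⟩
      · exact ⟨τ', hτ', rfl⟩
    obtain ⟨τ', hτ', rfl⟩ := hc2
    obtain ⟨ζ, hζ⟩ := hτ'
    by_cases hζ0 : ζ = []
    · -- τ' = zb
      subst hζ0
      simp only [List.nil_append] at hζ
      subst hζ
      exact Or.inl ⟨τ', [], η ++ (rep k' z ++ (τ' ++ [d])), d, e, hd, rfl, hxsplit⟩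
    · -- τ' is a proper suffix of zb; consider the suffix τ' ++ e :: η of z
      have hsuf : (τ' ++ e :: η) <:+ z := ⟨ζ, by rw [hsplit, ← hζ]; simp⟩
      have hζlen : 1 ≤ ζ.length := by
        rcases exists_cons_of_ne_nil' hζ0 with ⟨c, l', rfl⟩; simp
      have hlen : (τ' ++ e :: η).length < z.length := by
        have hlz := congrArg List.length hζ
        simp only [List.length_append] at hlz
        rw [hsplit]
        simp only [List.length_append, List.length_cons]
        omega
      have hne : (τ' ++ e :: η) ≠ z := fun h => by rw [h] at hlen; omega
      have hlex := lyndon_suffix hz hsuf (by simp) hne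
      obtain ⟨r, α, β, a, b, hab, h1, h2⟩ := lexLt_diff hlex hlen
      rcases lt_or_ge r.length τ'.length with hrl | hrl
      · -- difference inside τ'
        have hrpre : r <+: τ' :=
          List.prefix_of_prefix_length_le ⟨a :: α, h1.symm⟩ (List.prefix_append _ _)
            (le_of_lt hrl)
        obtain ⟨τ₂, hτ₂⟩ := hrpre
        have hkey : τ₂ ++ e :: η = a :: α := by
          rw [← hτ₂, List.append_assoc] at h1
          exact List.append_cancel_left h1
        have hτ₂0 : τ₂ ≠ [] := by
          intro hemp
          rw [hemp, List.append_nil] at hτ₂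
          rw [← hτ₂] at hrl
          omega
        obtain ⟨c, τ₃, rfl⟩ := exists_cons_of_ne_nil' hτ₂0
        rw [List.cons_append, List.cons.injEq] at hkey
        have hca : c = a := hkey.1
        have key2 : ∀ R : List X, z ++ R = r ++ b :: (β ++ R) := by
          intro R
          rw [h2]
          simp
        refine Or.inl ⟨r, τ₃ ++ [d], β ++ (rep k' z ++ (zb ++ [d])), c, b,
          hca ▸ hab, ?_, hxz.trans (key2 _)⟩
        rw [← hτ₂]; simp
      · -- r extends τ'
        have hτpre : τ' <+: r :=
          List.prefix_of_prefix_length_le (List.prefix_append _ _) ⟨a :: α, h1.symm⟩ hrl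
        obtain ⟨ρ, rfl⟩ := hτpre
        by_cases hρ0 : ρ = []
        · subst hρ0
          simp only [List.append_nil] at h1 h2
          have hea : e = a := by
            have hkey := List.append_cancel_left h1
            rw [List.cons.injEq] at hkey
            exact hkey.1
          have key2 : ∀ R : List X, z ++ R = τ' ++ b :: (β ++ R) := by
            intro R
            rw [h2]
            simp
          exact Or.inl ⟨τ', [], β ++ (rep k' z ++ (zb ++ [d])), d, b,
            by rw [hea] at hd; exact lt_trans hd hab, rfl, hxz.trans (key2 _)⟩
        · obtain ⟨c, ρ', rfl⟩ := exists_cons_of_ne_nil' hρ0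
          have hec : e = c := by
            rw [List.append_assoc] at h1
            have hkey := List.append_cancel_left h1
            rw [List.cons_append, List.cons.injEq] at hkey
            exact hkey.1
          have key2 : ∀ R : List X, z ++ R = τ' ++ c :: (ρ' ++ b :: (β ++ R)) := by
            intro R
            rw [h2]
            simp
          exact Or.inl ⟨τ', [], ρ' ++ b :: (β ++ (rep k' z ++ (zb ++ [d]))), d, c,
            hec ▸ hd, rfl, hxz.trans (key2 _)⟩
  · -- σ = τ ++ (rep m z ++ (zb ++ [d])), τ <:+ z, m < k'+1
    by_cases hτz : τ = z
    · subst hτz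
      have hσeq : τ ++ (rep m τ ++ (zb ++ [d])) = rep (m + 1) τ ++ (zb ++ [d]) := by
        rw [rep_succ, List.append_assoc]
      rw [hσeq] at hσx ⊢
      by_cases hmk : m + 1 = k' + 1
      · exact absurd (by rw [hmk]) hσx
      · exact hpow (m + 1) (by omega)
    · by_cases hτ0 : τ = []
      · subst hτ0
        simp only [List.nil_append]
        exact hpow m (by omega)
      · have hτlen : τ.length < z.length := by
          have h1 := hτ.length_le
          rcases lt_or_eq_of_le h1 with h | h
          · exact h
          · exact absurd (hτ.eq_of_length h) hτz
        have hlex := lyndon_suffix hz hτ hτ0 hτz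
        obtain ⟨r, α, β, a, b, hab, h1, h2⟩ := lexLt_diff hlex hτlen
        have key2 : ∀ R : List X, z ++ R = r ++ b :: (β ++ R) := by
          intro R
          rw [h2]
          simp
        refine Or.inl ⟨r, α ++ (rep m z ++ (zb ++ [d])), β ++ (rep k' z ++ (zb ++ [d])),
          a, b, hab, ?_, hxz.trans (key2 _)⟩
        rw [h1]; simp

theorem rep_ne_nil {z : List X} {k : ℕ} (hk : 1 ≤ k) (hz : z ≠ []) : rep k z ≠ [] := by
  obtain ⟨k', rfl⟩ : ∃ k', k = k' + 1 := ⟨k - 1, by omega⟩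
  rw [rep_succ]
  simp [hz]

/-- Duval's structure theorem: every nonempty prefix of a Lyndon word is a prenecklace. -/
theorem prenecklace {x : List X} (hx : IsLyndon x) :
    ∀ p, p <+: x → p ≠ [] →
      ∃ z zb k, IsLyndon z ∧ zb <+: z ∧ zb ≠ z ∧ 1 ≤ k ∧ p = rep k z ++ zb := by
  suffices H : ∀ n p, p.length ≤ n → p <+: x → p ≠ [] →
      ∃ z zb k, IsLyndon z ∧ zb <+: z ∧ zb ≠ z ∧ 1 ≤ k ∧ p = rep k z ++ zb by
    exact fun p hp h0 => H p.length p le_rfl hp h0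
  intro n
  induction n with
  | zero =>
    intro p hlen hp h0
    exact absurd (List.length_eq_zero_iff.1 (by omega)) h0
  | succ n ih =>
    intro p hlen hp h0
    rcases List.eq_nil_or_concat p with rfl | ⟨q, d, rfl⟩
    · exact absurd rfl h0
    rw [List.concat_eq_append] at hp hlen ⊢
    by_cases hq0 : q = []
    · subst hq0
      refine ⟨[d], [], 1, lyndon_singleton d, List.nil_prefix, by simp, le_rfl, by simp [rep]⟩
    · have hqpre : q <+: x := (List.prefix_append q [d]).trans hp
      have hqlen : q.length ≤ n := by
        rw [List.length_append] at hlen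
        simp at hlen
        omega
      obtain ⟨z, zb, k, hzL, hzb, hzbne, hk, rfl⟩ := ih q hqlen hqpre hq0
      obtain ⟨η', hη'⟩ := hzb
      have hη'0 : η' ≠ [] := by
        rintro rfl
        exact hzbne (by simpa using hη')
      obtain ⟨e, η, rfl⟩ := exists_cons_of_ne_nil' hη'0
      have hsplit : z = zb ++ e :: η := hη'.symm
      by_cases hde : d = e
      · subst hde
        by_cases hzbe : zb ++ [d] = z
        · refine ⟨z, [], k + 1, hzL, List.nil_prefix, fun h => hzL.1 h.symm, by omega, ?_⟩
          rw [rep_succ', List.append_nil, List.append_assoc, hzbe]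
        · refine ⟨z, zb ++ [d], k, hzL, ?_, hzbe, hk, by rw [List.append_assoc]⟩
          refine ⟨η, ?_⟩
          rw [hsplit]
          simp
      · -- d ≠ e : show d < e using Lyndon-ness of x, then apply duval_ext
        obtain ⟨x', hx'⟩ := hp
        obtain ⟨k'', rfl⟩ : ∃ k'', k = k'' + 1 := ⟨k - 1, by omega⟩
        have key : ∀ R : List X, z ++ R = zb ++ e :: (η ++ R) := by
          intro R
          rw [hsplit]
          simp
        have hxdec : x = rep (k'' + 1) z ++ (zb ++ d :: x') := by
          rw [← hx']
          simp
        have hσ : zb ++ d :: x' <:+ x := ⟨rep (k'' + 1) z, hxdec.symm⟩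
        have hσx : zb ++ d :: x' ≠ x := by
          intro h
          have := congrArg List.length (hxdec.symm.trans h.symm)
          rw [List.length_append] at this
          have hrep0 : rep (k'' + 1) z ≠ [] := rep_ne_nil (by omega) hzL.1
          have : (rep (k'' + 1) z).length ≠ 0 := fun hh => hrep0 (List.length_eq_zero_iff.1 hh)
          omega
        have hlex := lyndon_suffix hx hσ (by simp) hσx
        have hxsplit : x = zb ++ e :: (η ++ (rep k'' z ++ (zb ++ d :: x'))) := by
          rw [hxdec, rep_succ, List.append_assoc, key]
        have hdlt : d < e := by
          rcases lt_trichotomy d e with h | h | h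
          · exact h
          · exact absurd h hde
          · exfalso
            exact lexLt_asymm hlex
              (Or.inl ⟨zb, η ++ (rep k'' z ++ (zb ++ d :: x')), x', e, d, h, hxsplit, rfl⟩)
        refine ⟨rep (k'' + 1) z ++ (zb ++ [d]), [], 1, duval_ext hzL hsplit hdlt (by omega),
          List.nil_prefix, by simp, le_rfl, by simp [rep]⟩

/-- length-based strict suffix gives diff decomposition -/
theorem lyndon_suffix_diff {u s : List X} (hu : IsLyndon u) (hs : s <:+ u) (h0 : s ≠ [])
    (hne : s ≠ u) :
    ∃ (r α β : List X) (a b : X), a < b ∧ s = r ++ a :: α ∧ u = r ++ b :: β := by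
  have hlen : s.length < u.length := by
    rcases lt_or_eq_of_le hs.length_le with h | h
    · exact h
    · exact absurd (hs.eq_of_length h) hne
  exact lexLt_diff (lyndon_suffix hu hs h0 hne) hlen

theorem lexLt_concat_right {u v : List X} (hv : IsLyndon v) (hu0 : u ≠ []) (h : LexLt v u) :
    LexLt v (u ++ v) := by
  rcases h with ⟨r, α, β, a, b, hab, h1, h2⟩ | ⟨⟨vb, hvb⟩, hne⟩
  · refine Or.inl ⟨r, α, β ++ v, a, b, hab, h1, by rw [h2]; simp⟩
  · -- v = u ++ vb
    have hvb0 : vb ≠ [] := by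
      rintro rfl
      exact hne (by simpa using hvb)
    have hsuf : vb <:+ v := ⟨u, hvb⟩
    have hvbv : vb ≠ v := by
      intro h
      subst h
      have := congrArg List.length hvb
      rw [List.length_append] at this
      have : u.length ≠ 0 := fun hh => hu0 (List.length_eq_zero_iff.1 hh)
      omega
    have := lyndon_suffix hv hsuf hvb0 hvbv
    have h2 := (lexLt_append_left_iff (w := u)).2 this
    rw [hvb] at h2
    exact h2

theorem concat_lyndon {u v : List X} (hu : IsLyndon u) (hv : IsLyndon v) (h : LexLt v u) :
    IsLyndon (u ++ v) := by
  refine lyndon_of_suffix (by simp [hu.1]) ?_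
  intro σ hσ hσ0 hσx
  rcases suffix_append_cases hσ with hs | ⟨τ, hτ, rfl⟩
  · rcases eq_or_ne σ v with rfl | hne
    · exact lexLt_concat_right hv hu.1 h
    · exact lexLt_trans (lyndon_suffix hv hs hσ0 hne) (lexLt_concat_right hv hu.1 h)
  · by_cases hτu : τ = u
    · exact absurd (by rw [hτu]) hσx
    by_cases hτ0 : τ = []
    · subst hτ0
      simp only [List.nil_append]
      exact lexLt_concat_right hv hu.1 h
    · obtain ⟨r, α, β, a, b, hab, h1, h2⟩ := lyndon_suffix_diff hu hτ hτ0 hτu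
      rw [h1, h2]
      exact diff_lexLt_append hab v v

theorem lexLt_append_self {u v : List X} (hu0 : u ≠ []) (hv0 : v ≠ []) : LexLt (u ++ v) u := by
  refine prefix_lexLt (List.prefix_append u v) ?_
  intro h
  have := congrArg List.length h
  rw [List.length_append] at this
  exact hv0 (List.length_eq_zero_iff.1 (by omega))

/-- The key combinatorial lemma: a straddling Lyndon factor of `u ++ v` (other than `u ++ v`
itself) forces the existence of a Lyndon factor of `u` or of `v` strictly between `v` and `u`. -/
theorem key_lemma {u v s t : List X} (hu : IsLyndon u) (hv : IsLyndon v) (huv : LexLt v u)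
    (hs : s <:+ u) (hs0 : s ≠ []) (ht : t <+: v) (ht0 : t ≠ [])
    (hw : IsLyndon (s ++ t)) (hne : ¬(s = u ∧ t = v)) :
    ∃ z, IsLyndon z ∧ (z <:+: u ∨ z <:+: v) ∧ LexLt v z ∧ LexLt z u := by
  have htne_w : t ≠ s ++ t := by
    intro h
    have := congrArg List.length h
    rw [List.length_append] at this
    exact hs0 (List.length_eq_zero_iff.1 (by omega))
  have htsuf_w : t <:+ s ++ t := List.suffix_append s t
  have hvw : LexLt v (s ++ t) := by
    have h1 : LexLt t (s ++ t) := lyndon_suffix hw htsuf_w ht0 htne_w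
    rcases eq_or_ne t v with rfl | htv
    · exact h1
    · exact lexLt_trans (prefix_lexLt ht htv) h1
  rcases huv with ⟨c, v₁, u₁, y, xx, hyx, hveq, hueq⟩ | ⟨hupre, hune⟩
  · -- CASE D : first difference
    have hcv : c <+: v := ⟨y :: v₁, hveq.symm⟩
    have hcu : c <+: u := ⟨xx :: u₁, hueq.symm⟩
    by_cases hv₁ : v₁ = []
    · -- CASE A : v = c ++ [y]
      by_cases hsu : s = u
      · -- then t must be a prefix of c : border, contradiction
        exfalso
        have htv : t ≠ v := fun h => hne ⟨hsu, h⟩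
        have htlen : t.length ≤ c.length := by
          have h1 : t.length < v.length :=
            lt_of_le_of_ne ht.length_le fun h => htv (ht.eq_of_length h)
          have h2 : v.length = c.length + 1 := by rw [hveq, hv₁]; simp
          omega
        have htc : t <+: c := List.prefix_of_prefix_length_le ht hcv htlen
        refine lyndon_no_border hw ((htc.trans hcu).trans ?_) htsuf_w ht0 htne_w
        rw [hsu]
        exact List.prefix_append u t
      · -- s is a proper suffix of u : use the prenecklace root of s
        have hspre : s <+: s ++ t := List.prefix_append s t
        obtain ⟨z, zb, k, hzL, hzb, hzbne, hk, hseq⟩ := prenecklace hw s hspre hs0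
        have hzs : z <+: s := by
          have : z <+: rep k z ++ zb := (prefix_rep k hk z).trans (List.prefix_append _ _)
          rwa [← hseq] at this
        have hzw : z <+: s ++ t := hzs.trans hspre
        have hzinfix : z <:+: u := List.infix_iff_prefix_suffix.2 ⟨s, hzs, hs⟩
        have hzltu : LexLt z u := by
          rcases lexLt_trichot z u with h | h | h
          · exact h
          · exfalso
            have h1 := hzs.length_le
            have h2 : s.length < u.length :=
              lt_of_le_of_ne hs.length_le fun hh => hsu (hs.eq_of_length hh)
            rw [h] at h1
            omega
          · exfalso
            rcases h with ⟨r, α, β, a, b, hab, h1, h2⟩ | ⟨hzpre, hzune⟩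
            · obtain ⟨s₂, hs₂⟩ := hzs
              have : LexLt u s := by
                rw [← hs₂, h1, h2]
                have h3 := diff_lexLt_append (r := r) (α := α) (β := β) hab ([] : List X) s₂
                simpa using h3
              exact lexLt_asymm this (lyndon_suffix hu hs hs0 hsu)
            · by_cases hzb0 : zb = []
              · have hzsufs : z <:+ s := by
                  rw [hseq, hzb0, List.append_nil]
                  exact suffix_rep k hk z
                exact lyndon_no_border hu hzpre (hzsufs.trans hs) hzL.1 hzune
              · have hzbsufs : zb <:+ s := ⟨rep k z, hseq.symm⟩
                refine lyndon_no_border hu (hzb.trans hzpre) (hzbsufs.trans hs) hzb0 ?_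
                intro hh
                have l1 : zb.length < z.length :=
                  lt_of_le_of_ne hzb.length_le fun hh2 => hzbne (hzb.eq_of_length hh2)
                have l2 := hzpre.length_le
                rw [hh] at l1
                omega
        have hvltz : LexLt v z := by
          rcases lexLt_trichot v z with h | h | h
          · exact h
          · exfalso
            have hvz : v <+: z := by rw [h]
            exact lyndon_no_border hw ((ht.trans hvz).trans hzw) htsuf_w ht0 htne_w
          · exfalso
            rcases h with ⟨r, α, β, a, b, hab, h1, h2⟩ | ⟨hvz, hvzne⟩
            · obtain ⟨w₂, hw₂⟩ := hzw
              have : LexLt (s ++ t) v := by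
                rw [← hw₂, h1, h2]
                have h3 := diff_lexLt_append (r := r) (α := α) (β := β) hab w₂ ([] : List X)
                simpa using h3
              exact lexLt_asymm this hvw
            · exact lyndon_no_border hw ((ht.trans hvz).trans hzw) htsuf_w ht0 htne_w
        exact ⟨z, hzL, Or.inl hzinfix, hvltz, hzltu⟩
    · -- CASE D1 : v₁ ≠ [] ; witness c ++ [y]
      have hcy : IsLyndon (c ++ [y]) := by
        by_cases hc0 : c = []
        · rw [hc0]
          simpa using lyndon_singleton y
        · obtain ⟨z, zb, k, hzL, hzb, hzbne, hk, hceq⟩ := prenecklace hu c hcu hc0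
          obtain ⟨η', hη'⟩ := hzb
          have hη'0 : η' ≠ [] := by
            rintro rfl
            exact hzbne (by simpa using hη')
          obtain ⟨e, η, rfl⟩ := exists_cons_of_ne_nil' hη'0
          have hsplit : z = zb ++ e :: η := hη'.symm
          obtain ⟨k'', rfl⟩ : ∃ k'', k = k'' + 1 := ⟨k - 1, by omega⟩
          have hkey : ∀ R : List X, z ++ R = zb ++ e :: (η ++ R) := by
            intro R
            rw [hsplit]
            simp
          have hye : y < e := by
            have hxe : ¬ e < xx := by
              intro hlt
              have hudec : u = rep (k'' + 1) z ++ (zb ++ xx :: u₁) := by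
                rw [hueq, hceq]
                simp
              have hσ : zb ++ xx :: u₁ <:+ u := ⟨rep (k'' + 1) z, hudec.symm⟩
              have hσu : zb ++ xx :: u₁ ≠ u := by
                intro h
                have := congrArg List.length (hudec.symm.trans h.symm)
                rw [List.length_append] at this
                have hrep0 : rep (k'' + 1) z ≠ [] := rep_ne_nil (by omega) hzL.1
                have : (rep (k'' + 1) z).length ≠ 0 :=
                  fun hh => hrep0 (List.length_eq_zero_iff.1 hh)
                omega
              have hlex := lyndon_suffix hu hσ (by simp) hσu
              have husplit : u = zb ++ e :: (η ++ (rep k'' z ++ (zb ++ xx :: u₁))) := by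
                rw [hudec, rep_succ, List.append_assoc, hkey]
              exact lexLt_asymm hlex
                (Or.inl ⟨zb, η ++ (rep k'' z ++ (zb ++ xx :: u₁)), u₁, e, xx, hlt, husplit, rfl⟩)
            exact lt_of_lt_of_le hyx (not_lt.1 hxe)
          have hres := duval_ext hzL hsplit hye (k := k'' + 1) (by omega)
          rw [hceq, List.append_assoc]
          exact hres
      have hcyv : (c ++ [y]) <+: v := ⟨v₁, by rw [hveq]; simp⟩
      have hcyvne : c ++ [y] ≠ v := by
        intro h
        have := congrArg List.length (h.trans hveq)
        rcases exists_cons_of_ne_nil' hv₁ with ⟨cc, l', rfl⟩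
        simp at this
      refine ⟨c ++ [y], hcy, Or.inr hcyv.isInfix, prefix_lexLt hcyv hcyvne, ?_⟩
      exact Or.inl ⟨c, [], u₁, y, xx, hyx, rfl, hueq⟩
  · -- CASE P : u is a proper prefix of v
    by_cases hsu : s = u
    · subst hsu
      have htv : t ≠ v := fun h => hne ⟨rfl, h⟩
      by_cases hlen : t.length ≤ s.length
      · exfalso
        have hts : t <+: s := List.prefix_of_prefix_length_le ht hupre hlen
        exact lyndon_no_border hw (hts.trans (List.prefix_append s t)) htsuf_w ht0 htne_w
      · have hst : s <+: t := List.prefix_of_prefix_length_le hupre ht (by omega)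
        obtain ⟨z, zb, k, hzL, hzb, hzbne, hk, hteq⟩ := prenecklace hv t ht ht0
        have hzt : z <+: t := by
          have : z <+: rep k z ++ zb := (prefix_rep k hk z).trans (List.prefix_append _ _)
          rwa [← hteq] at this
        by_cases hzlen : s.length < z.length
        · -- witness z
          have hzv : z <+: v := hzt.trans ht
          have htvlen : t.length < v.length :=
            lt_of_le_of_ne ht.length_le fun h => htv (ht.eq_of_length h)
          have hzvne : z ≠ v := by
            intro h
            have := hzt.length_le
            rw [h] at this
            omega
          have hsz : s <+: z := List.prefix_of_prefix_length_le hst hzt (by omega)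
          have hszne : s ≠ z := by
            intro h
            rw [h] at hzlen
            omega
          exact ⟨z, hzL, Or.inr hzv.isInfix, prefix_lexLt hzv hzvne, prefix_lexLt hsz hszne⟩
        · exfalso
          have hzs : z <+: s := List.prefix_of_prefix_length_le hzt hst (by omega)
          have hst2 : s <+: rep k z ++ zb := by
            rw [← hteq]
            exact hst
          obtain ⟨m, ρ, hρ, hρne, hseq2⟩ :=
            prefix_rep_cases (p := s) hzL.1 hzb hzbne hst2
          by_cases hρ0 : ρ = []
          · rw [hρ0, List.append_nil] at hseq2
            have hm1 : 1 ≤ m := by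
              rcases Nat.eq_zero_or_pos m with rfl | h
              · rw [rep_zero] at hseq2
                exact absurd hseq2 hu.1
              · exact h
            by_cases hsz : s = z
            · -- w = z ++ t = rep (k+1) z ++ zb : border in w
              have hzprew : z <+: s ++ t := by
                rw [hsz]
                exact List.prefix_append z t
              by_cases hzb0 : zb = []
              · have hw_eq : s ++ t = rep (k + 1) z := by
                  rw [hsz, hteq, hzb0, List.append_nil, ← rep_succ]
                have hzsufw : z <:+ s ++ t := by
                  rw [hw_eq]
                  exact suffix_rep (k + 1) (by omega) z
                refine lyndon_no_border hw hzprew hzsufw hzL.1 ?_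
                intro h
                have := congrArg List.length h
                rw [List.length_append, ← hsz] at this
                have ht0' : t.length ≠ 0 := fun hh => ht0 (List.length_eq_zero_iff.1 hh)
                omega
              · have hzbw : zb <+: s ++ t := hzb.trans hzprew
                have hzbt : zb <:+ t := ⟨rep k z, hteq.symm⟩
                have hzbsufw : zb <:+ s ++ t := hzbt.trans htsuf_w
                refine lyndon_no_border hw hzbw hzbsufw hzb0 ?_
                intro h
                have l1 : zb.length < z.length :=
                  lt_of_le_of_ne hzb.length_le fun hh => hzbne (hzb.eq_of_length hh)
                have := congrArg List.length h
                rw [List.length_append] at this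
                rw [← hsz] at l1
                have ht0' : t.length ≠ 0 := fun hh => ht0 (List.length_eq_zero_iff.1 hh)
                omega
            · -- border z on s
              have hzsufs : z <:+ s := by
                rw [hseq2]
                exact suffix_rep m hm1 z
              exact lyndon_no_border hu hzs hzsufs hzL.1 (Ne.symm hsz)
          · -- border ρ on s
            have hρs : ρ <:+ s := ⟨rep m z, hseq2.symm⟩
            have hρu : ρ <+: s := hρ.trans hzs
            refine lyndon_no_border hu hρu hρs hρ0 ?_
            intro h
            have l1 : ρ.length < z.length :=
              lt_of_le_of_ne hρ.length_le fun hh => hρne (hρ.eq_of_length hh)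
            have l2 := hzs.length_le
            rw [h] at l1
            omega
    · exfalso
      obtain ⟨r, α, β, a, b, hab, h1, h2⟩ := lyndon_suffix_diff hu hs hs0 hsu
      obtain ⟨m, hm⟩ := hupre
      have : LexLt (s ++ t) v := by
        rw [← hm, h1, h2]
        exact diff_lexLt_append hab t m
      exact lexLt_asymm this hvw

theorem inj_aux (U : Set (List X)) (hU : IsClosedSet U) {u v u' v' : List X}
    (huU : u ∈ U) (hvU : v ∈ U) (hu'U : u' ∈ U) (hv'U : v' ∈ U)
    (hadj' : ¬∃ w ∈ U, LexLt v' w ∧ LexLt w u')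
    (heq : u ++ v = u' ++ v') (hlt : u.length < u'.length) : False := by
  have huL := hU.1 u huU
  have hvL := hU.1 v hvU
  have hu'L := hU.1 u' hu'U
  have hv'L := hU.1 v' hv'U
  have hupre : u <+: u' :=
    List.prefix_of_prefix_length_le (⟨v, heq⟩ : u <+: u' ++ v')
      (List.prefix_append u' v') (le_of_lt hlt)
  obtain ⟨m, hm⟩ := hupre
  have hm0 : m ≠ [] := by
    rintro rfl
    rw [List.append_nil] at hm
    rw [hm] at hlt
    omega
  have hveq : v = m ++ v' := by
    apply List.append_cancel_left (as := u)
    rw [← List.append_assoc, hm, heq]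
  have h1 : LexLt v' v := by
    refine lyndon_suffix hvL ⟨m, hveq.symm⟩ hv'L.1 ?_
    intro h
    have := congrArg List.length hveq
    rw [h, List.length_append] at this
    exact hm0 (List.length_eq_zero_iff.1 (by omega))
  have hmsuf : m <:+ u' := ⟨u, hm⟩
  have hmne : m ≠ u' := by
    intro h
    have := congrArg List.length hm
    rw [h, List.length_append] at this
    exact huL.1 (List.length_eq_zero_iff.1 (by omega))
  obtain ⟨r, α, β, a, b, hab, hh1, hh2⟩ := lyndon_suffix_diff hu'L hmsuf hm0 hmne
  have h2 : LexLt v u' := by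
    rw [hveq, hh1, hh2]
    have h3 := diff_lexLt_append (r := r) (α := α) (β := β) hab v' ([] : List X)
    simpa using h3
  exact hadj' ⟨v, hvU, h1, h2⟩

theorem upsilon_aux_main (U : Set (List X)) (hU : IsClosedSet U) :
    (∀ p ∈ Upsilon U, ∀ p' ∈ Upsilon U, p.1 ++ p.2 = p'.1 ++ p'.2 → p = p') ∧
    (∀ p ∈ Upsilon U, p.1 ++ p.2 ∈ Phi U) := by
  constructor
  · rintro ⟨u, v⟩ hp ⟨u', v'⟩ hp' heq
    obtain ⟨huU, hvU, hvu, hadj⟩ := hp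
    obtain ⟨hu'U, hv'U, hvu', hadj'⟩ := hp'
    simp only at heq huU hvU hvu hadj hu'U hv'U hvu' hadj' ⊢
    rcases lt_trichotomy u.length u'.length with h | h | h
    · exact (inj_aux U hU huU hvU hu'U hv'U hadj' heq h).elim
    · obtain ⟨h1, h2⟩ := List.append_inj heq h
      rw [h1, h2]
    · exact (inj_aux U hU hu'U hv'U huU hvU hadj heq.symm h).elim
  · rintro ⟨u, v⟩ hp
    obtain ⟨huU, hvU, hvu, hadj⟩ := hp
    simp only at huU hvU hvu hadj ⊢
    obtain ⟨hLy, hLet, hCl⟩ := hU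
    have hu := hLy u huU
    have hv := hLy v hvU
    have hwL : IsLyndon (u ++ v) := concat_lyndon hu hv hvu
    refine ⟨hwL, ?_, ?_⟩
    · intro hmem
      exact hadj ⟨u ++ v, hmem, lexLt_concat_right hv hu.1 hvu, lexLt_append_self hu.1 hv.1⟩
    · intro w hwLy hwin hwne
      obtain ⟨p₁, p₂, hdec⟩ := hwin
      have hp₁wuv : p₁ ++ w <+: u ++ v := ⟨p₂, hdec⟩
      have hp₁uv : p₁ <+: u ++ v := (List.prefix_append p₁ w).trans hp₁wuv
      by_cases h1 : p₁.length + w.length ≤ u.length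
      · -- w is a factor of u
        have hp₁w : p₁ ++ w <+: u :=
          List.prefix_of_prefix_length_le hp₁wuv (List.prefix_append u v)
            (by rw [List.length_append]; exact h1)
        obtain ⟨r, hr⟩ := hp₁w
        exact hCl u huU w hwLy ⟨p₁, r, hr⟩
      · by_cases h2 : u.length ≤ p₁.length
        · -- w is a factor of v
          have hup₁ : u <+: p₁ :=
            List.prefix_of_prefix_length_le (List.prefix_append u v) hp₁uv h2
          obtain ⟨q, hq⟩ := hup₁
          have hv2 : (q ++ w) ++ p₂ = v := by
            apply List.append_cancel_left (as := u)
            rw [← hdec, ← hq]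
            simp
          exact hCl v hvU w hwLy ⟨q, p₂, hv2⟩
        · -- w straddles the boundary : apply the key lemma
          exfalso
          have h2' : p₁.length < u.length := by omega
          have h1' : u.length < p₁.length + w.length := by omega
          have hp₁u : p₁ <+: u :=
            List.prefix_of_prefix_length_le hp₁uv (List.prefix_append u v) (le_of_lt h2')
          obtain ⟨s, hs_eq⟩ := hp₁u
          have hs0 : s ≠ [] := by
            intro h
            have := congrArg List.length hs_eq
            rw [h, List.length_append] at this
            simp at this
            omega
          have hsuf : s <:+ u := ⟨p₁, hs_eq⟩
          have hkey : w ++ p₂ = s ++ v := by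
            apply List.append_cancel_left (as := p₁)
            rw [← List.append_assoc, ← List.append_assoc, hs_eq, hdec]
          have hslen : s.length ≤ w.length := by
            have := congrArg List.length hs_eq
            rw [List.length_append] at this
            omega
          have hsw : s <+: w :=
            List.prefix_of_prefix_length_le (⟨v, hkey.symm⟩ : s <+: w ++ p₂)
              (List.prefix_append w p₂) hslen
          obtain ⟨t, ht_eq⟩ := hsw
          have htveq : t ++ p₂ = v := by
            apply List.append_cancel_left (as := s)
            rw [← List.append_assoc, ht_eq, hkey]
          have htpre : t <+: v := ⟨p₂, htveq⟩
          have ht0 : t ≠ [] := by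
            intro h
            rw [h, List.append_nil] at ht_eq
            have := congrArg List.length hs_eq
            rw [List.length_append, ht_eq] at this
            omega
          have hwst : IsLyndon (s ++ t) := by rw [ht_eq]; exact hwLy
          have hnsv : ¬(s = u ∧ t = v) := by
            rintro ⟨rfl, rfl⟩
            exact hwne ht_eq.symm
          obtain ⟨z, hzL, hzf, hvz, hzu⟩ :=
            key_lemma hu hv hvu hsuf hs0 htpre ht0 hwst hnsv
          have hzU : z ∈ U := by
            rcases hzf with h | h
            · exact hCl u huU z hzL h
            · exact hCl v hvU z hzL h
          exact hadj ⟨z, hzU, hvz, hzu⟩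


theorem upsilon_concat_injective_into_phi (U : Set (List X)) (hU : IsClosedSet U) :
    (∀ p ∈ Upsilon U, ∀ p' ∈ Upsilon U, p.1 ++ p.2 = p'.1 ++ p'.2 → p = p') ∧
    (∀ p ∈ Upsilon U, p.1 ++ p.2 ∈ Phi U) :=
  upsilon_aux_main U hU
end

section
/- Let U be a finite closed set of Lyndon words with #U = d. Then d − 1 ≤ #Φ(U) ≤ #Φ̄(U) ≤ d(d−1)/2. -/
variable {X : Type*} [LinearOrder X]

/-- `(u', u'')` is the Shirshov factorization of `u`: `u = u' ++ u''` where `u''` is the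
longest proper Lyndon suffix of `u`. -/
def IsShirshov (u u1 u2 : List X) : Prop :=
  u = u1 ++ u2 ∧ u1 ≠ [] ∧ u2 ≠ [] ∧ IsLyndon u2 ∧
    ∀ s : List X, s <:+ u → s ≠ u → IsLyndon s → s.length ≤ u2.length

/-- `Φ̄(U)`: Lyndon words not in `U` whose Shirshov factorization has both components in `U`. -/
def PhiBar (U : Set (List X)) : Set (List X) :=
  {v | IsLyndon v ∧ v ∉ U ∧ ∃ v1 v2 : List X, IsShirshov v v1 v2 ∧ v1 ∈ U ∧ v2 ∈ U}

set_option linter.unusedSectionVars false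

def mapw (u : List X) : List (WithTop X) := u.map (fun a => (a : WithTop X))

lemma mapw_cons (a : X) (u : List X) : mapw (a :: u) = (a : WithTop X) :: mapw u := rfl

def padw (u : List X) : List (WithTop X) := mapw u ++ [⊤]

lemma padw_append (u v : List X) :
    padw (u ++ v) = mapw u ++ padw v := by
  simp [padw, mapw]

lemma padw_cons (a : X) (u : List X) : padw (a :: u) = (a : WithTop X) :: padw u := by
  rw [padw, padw, mapw_cons, List.cons_append]

lemma padw_nil : padw ([] : List X) = [⊤] := rfl

lemma cons_lt_cons_iff' {α : Type*} [LinearOrder α] {a b : α} {l m : List α} :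
    (a :: l : List α) < b :: m ↔ a < b ∨ (a = b ∧ l < m) := by
  constructor
  · intro h
    have h' : List.Lex (· < ·) (a :: l) (b :: m) := h
    cases h' with
    | cons h => exact Or.inr ⟨rfl, h⟩
    | rel h => exact Or.inl h
  · rintro (h | ⟨rfl, h⟩)
    · exact List.Lex.rel h
    · exact List.Lex.cons h

lemma not_lt_nil' {α : Type*} [LinearOrder α] (l : List α) : ¬ l < ([] : List α) :=
  List.not_lt_nil _

lemma append_lt_append_iff' {α : Type*} [LinearOrder α] (l x y : List α) :
    l ++ x < l ++ y ↔ x < y := by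
  induction l with
  | nil => rfl
  | cons a l ih =>
    simp only [List.cons_append, cons_lt_cons_iff', lt_irrefl, false_or, true_and, ih]

lemma padw_lt_top {w : List X} (hw : w ≠ []) : padw w < [⊤] := by
  cases w with
  | nil => simp at hw
  | cons a w => exact List.Lex.rel (by simp [WithTop.coe_lt_top])

lemma padw_injective : Function.Injective (padw (X := X)) := by
  intro u v h
  induction u generalizing v with
  | nil =>
    cases v with
    | nil => rfl
    | cons b v =>
      rw [padw_nil, padw_cons] at h
      obtain ⟨h1, -⟩ := List.cons.inj h
      exact absurd h1.symm (WithTop.coe_ne_top)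
  | cons a u ih =>
    cases v with
    | nil =>
      rw [padw_nil, padw_cons] at h
      obtain ⟨h1, -⟩ := List.cons.inj h
      exact absurd h1 (WithTop.coe_ne_top)
    | cons b v =>
      rw [padw_cons, padw_cons] at h
      obtain ⟨h1, h2⟩ := List.cons.inj h
      have hab : a = b := by exact_mod_cast h1
      rw [hab, ih h2]

lemma prefix_padw_lt {v u : List X} (h : v <+: u) (hne : v ≠ u) : padw u < padw v := by
  obtain ⟨w, rfl⟩ := h
  have hw : w ≠ [] := by rintro rfl; simp at hne
  rw [padw_append, show padw v = mapw v ++ [⊤] from rfl, append_lt_append_iff']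
  exact padw_lt_top hw

lemma lexLt_iff_padw {u v : List X} : LexLt u v ↔ padw u < padw v := by
  constructor
  · rintro (⟨r, s, t, a, b, hab, rfl, rfl⟩ | ⟨hpre, hne⟩)
    · rw [padw_append, padw_append]
      rw [append_lt_append_iff', padw_cons, padw_cons]
      exact List.Lex.rel (by exact_mod_cast hab)
    · exact prefix_padw_lt hpre hne
  · intro h
    induction u generalizing v with
    | nil =>
      exfalso
      cases v with
      | nil => exact lt_irrefl _ h
      | cons b v =>
        rw [padw_nil, padw_cons] at h
        have h' : List.Lex (· < ·) [(⊤ : WithTop X)] ((b : WithTop X) :: padw v) := h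
        cases h' with
        | rel h => simp at h
    | cons a u ih =>
      cases v with
      | nil => exact Or.inr ⟨⟨a :: u, rfl⟩, by simp⟩
      | cons b v =>
        rw [padw_cons, padw_cons, cons_lt_cons_iff'] at h
        rcases h with h | ⟨hab, h⟩
        · exact Or.inl ⟨[], u, v, a, b, by exact_mod_cast h, rfl, rfl⟩
        · have hab' : a = b := by exact_mod_cast hab
          subst hab'
          rcases ih h with ⟨r, s, t, x, y, hxy, rfl, rfl⟩ | ⟨hpre, hne⟩
          · exact Or.inl ⟨a :: r, s, t, x, y, hxy, rfl, rfl⟩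
          · exact Or.inr ⟨List.cons_prefix_cons.2 ⟨rfl, hpre⟩, by simpa using hne⟩

lemma padE {a b : List X} (h : padw a < padw b) (hab : ¬ a <+: b) (hba : ¬ b <+: a)
    (t t' : List (WithTop X)) :
    mapw a ++ t < mapw b ++ t' := by
  induction a generalizing b with
  | nil => exact absurd (List.nil_prefix) hab
  | cons x a ih =>
    cases b with
    | nil => exact absurd (List.nil_prefix) hba
    | cons y b =>
      rw [padw_cons, padw_cons, cons_lt_cons_iff'] at h
      rw [mapw_cons, mapw_cons, List.cons_append, List.cons_append]
      rcases h with h | ⟨hxy, h⟩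
      · exact cons_lt_cons_iff'.2 (Or.inl h)
      · have hxy' : x = y := by exact_mod_cast hxy
        subst hxy'
        have hab' : ¬ a <+: b := fun hp => hab (List.cons_prefix_cons.2 ⟨rfl, hp⟩)
        have hba' : ¬ b <+: a := fun hp => hba (List.cons_prefix_cons.2 ⟨rfl, hp⟩)
        exact cons_lt_cons_iff'.2 (Or.inr ⟨rfl, ih h hab' hba'⟩)

lemma prefix_or_lt_of_lt {z s u : List X} (h : padw s < padw u) (hsu : ¬ s <+: u)
    (hus : ¬ u <+: s) (hz : z <+: s) : z <+: u ∨ padw z < padw u := by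
  induction z generalizing s u with
  | nil => exact Or.inl (List.nil_prefix)
  | cons x z ih =>
    cases s with
    | nil => exact absurd List.nil_prefix hsu
    | cons c s =>
      cases u with
      | nil => exact absurd List.nil_prefix hus
      | cons y u =>
        obtain ⟨rfl, hz2⟩ := List.cons_prefix_cons.1 hz
        rw [padw_cons, padw_cons, cons_lt_cons_iff'] at h
        rcases h with h | ⟨hxy, h⟩
        · right
          rw [padw_cons, padw_cons]
          exact cons_lt_cons_iff'.2 (Or.inl h)
        · have hxy' : x = y := by exact_mod_cast hxy
          subst hxy'
          have hsu' : ¬ s <+: u := fun hp => hsu (List.cons_prefix_cons.2 ⟨rfl, hp⟩)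
          have hus' : ¬ u <+: s := fun hp => hus (List.cons_prefix_cons.2 ⟨rfl, hp⟩)
          rcases ih h hsu' hus' hz2 with h' | h'
          · exact Or.inl (List.cons_prefix_cons.2 ⟨rfl, h'⟩)
          · right
            rw [padw_cons, padw_cons]
            exact cons_lt_cons_iff'.2 (Or.inr ⟨rfl, h'⟩)

lemma padw_lt_of_append_lt {s p w : List X} (h : padw (s ++ p) < padw w)
    (hsw : ¬ s <+: w) : padw s < padw w := by
  induction s generalizing w with
  | nil => exact absurd List.nil_prefix hsw
  | cons x s ih =>
    cases w with
    | nil => exact padw_lt_top (by simp)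
    | cons y w =>
      rw [List.cons_append, padw_cons, padw_cons, cons_lt_cons_iff'] at h
      rw [padw_cons, padw_cons]
      rcases h with h | ⟨hxy, h⟩
      · exact cons_lt_cons_iff'.2 (Or.inl h)
      · have hsw' : ¬ s <+: w := fun hp => by
          have hxy' : x = y := by exact_mod_cast hxy
          exact hsw (List.cons_prefix_cons.2 ⟨hxy', hp⟩)
        exact cons_lt_cons_iff'.2 (Or.inr ⟨hxy, ih h hsw'⟩)

lemma isLyndon_singleton (a : X) : IsLyndon [a] := by
  refine ⟨by simp, fun v w h hv hw => ?_⟩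
  exfalso
  have hl := congrArg List.length h
  rw [List.length_append] at hl
  have h1 : 0 < v.length := List.length_pos_iff.2 hv
  have h2 : 0 < w.length := List.length_pos_iff.2 hw
  simp at hl
  omega

lemma lyndon_suffix_lt {u s : List X} (hu : IsLyndon u) (hs : s <:+ u) (hne : s ≠ u)
    (hnil : s ≠ []) : padw s < padw u := by
  obtain ⟨p, rfl⟩ := hs
  have hp : p ≠ [] := by rintro rfl; simp at hne
  have hrot := lexLt_iff_padw.1 (hu.2 p s rfl hp hnil)
  by_cases hpre : s <+: p ++ s
  · exfalso
    obtain ⟨z, hz⟩ := hpre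
    have hlen := congrArg List.length hz
    simp at hlen
    have hzp : z.length = p.length := by omega
    have hzne : z ≠ [] := by
      intro hz0; subst hz0
      simp at hzp
      exact hp (List.length_eq_zero_iff.1 hzp.symm)
    have hrot2 := lexLt_iff_padw.1 (hu.2 s z hz.symm hnil hzne)
    rw [← hz] at hrot
    rw [padw_append, padw_append, append_lt_append_iff'] at hrot
    by_cases hpz : p = z
    · subst hpz; exact lt_irrefl _ hrot
    · have hnp : ¬ p <+: z := fun hq =>
        hpz (List.IsPrefix.eq_of_length hq hzp.symm)
      have hnz : ¬ z <+: p := fun hq =>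
        hpz (List.IsPrefix.eq_of_length hq hzp).symm
      have := padE hrot hnp hnz (padw s) (padw s)
      rw [← padw_append, ← padw_append] at this
      exact lt_asymm this hrot2
  · exact padw_lt_of_append_lt hrot hpre

lemma factor_prefix_or_lt {u s z : List X} (hu : IsLyndon u) (hs : s <:+ u) (hne : s ≠ u)
    (hnil : s ≠ []) (hz : z <+: s) : z <+: u ∨ padw z < padw u := by
  have h1 := lyndon_suffix_lt hu hs hne hnil
  have hsu : ¬ s <+: u := fun hp => lt_asymm h1 (prefix_padw_lt hp hne)
  have hus : ¬ u <+: s := fun hp => by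
    have h3 := List.IsPrefix.length_le hp
    have h2 := List.IsSuffix.length_le hs
    exact hne (List.IsSuffix.eq_of_length hs (le_antisymm h2 h3))
  exact prefix_or_lt_of_lt h1 hsu hus hz

lemma lyndon_of_suffix_lt {u : List X} (hne : u ≠ [])
    (h : ∀ s, s <:+ u → s ≠ u → s ≠ [] → padw s < padw u) : IsLyndon u := by
  refine ⟨hne, fun p s hps hp hs => ?_⟩
  subst hps
  rw [lexLt_iff_padw]
  have hsne : s ≠ p ++ s := by
    intro he
    have := congrArg List.length he
    simp at this
    exact hp this
  have h1 := h s ⟨p, rfl⟩ hsne hs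
  by_cases hpre : s <+: p ++ s
  · exact absurd (prefix_padw_lt hpre hsne) (fun hq => lt_asymm h1 hq)
  · have hus : ¬ (p ++ s) <+: s := fun hq => by
      have h3 := List.IsPrefix.length_le hq
      simp at h3
      exact hp h3
    have := padE h1 hpre hus (padw p) ([⊤])
    rw [← padw_append] at this
    exact this

lemma suffix_decomp {s a b : List X} (h : s <:+ a ++ b) :
    s <:+ b ∨ ∃ a2, a2 <:+ a ∧ a2 ≠ [] ∧ s = a2 ++ b := by
  obtain ⟨r, hr⟩ := h
  rcases List.append_eq_append_iff.1 hr with ⟨a', ha1, ha2⟩ | ⟨c, hc1, hc2⟩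
  · cases a' with
    | nil => left; rw [ha2]; simp
    | cons x a' => exact Or.inr ⟨x :: a', ⟨r, ha1.symm⟩, by simp, ha2⟩
  · exact Or.inl ⟨c, hc2.symm⟩

lemma infix_decomp {w a b : List X} (h : w <:+: a ++ b) :
    w <:+: a ∨ w <:+: b ∨
      ∃ a2 b1, a2 <:+ a ∧ b1 <+: b ∧ a2 ≠ [] ∧ b1 ≠ [] ∧ w = a2 ++ b1 := by
  obtain ⟨s, t, hst⟩ := h
  rw [List.append_assoc] at hst
  rcases List.append_eq_append_iff.1 hst with ⟨a', ha1, ha2⟩ | ⟨c, hc1, hc2⟩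
  · rcases List.append_eq_append_iff.1 ha2 with ⟨w', hw1, hw2⟩ | ⟨b1, hb1, hb2⟩
    · left
      exact ⟨s, w', by rw [ha1, hw1, List.append_assoc]⟩
    · rcases eq_or_ne b1 [] with rfl | hb1n
      · rw [List.append_nil] at hb1
        subst hb1
        exact Or.inl (List.IsSuffix.isInfix ⟨s, ha1.symm⟩)
      · rcases eq_or_ne a' [] with rfl | ha'n
        · rw [List.nil_append] at hb1
          subst hb1
          exact Or.inr (Or.inl (List.IsPrefix.isInfix ⟨t, hb2.symm⟩))
        · exact Or.inr (Or.inr ⟨a', b1, ⟨s, ha1.symm⟩, ⟨t, hb2.symm⟩, ha'n, hb1n, hb1⟩)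
  · right; left
    exact ⟨c, t, by rw [hc2, List.append_assoc]⟩

lemma padw_lt_append {u v : List X} (hu : IsLyndon u) (hv : IsLyndon v)
    (h : padw v < padw u) : padw v < padw (u ++ v) := by
  by_cases huv : u <+: v
  · obtain ⟨v', rfl⟩ := huv
    have hv' : v' ≠ [] := by
      rintro rfl
      rw [List.append_nil] at h
      exact lt_irrefl _ h
    rw [padw_append, padw_append, append_lt_append_iff']
    refine lyndon_suffix_lt hv ⟨u, rfl⟩ ?_ hv'
    intro he
    have hl := congrArg List.length he
    rw [List.length_append] at hl
    have : 0 < u.length := List.length_pos_iff.2 hu.1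
    omega
  · by_cases hvu : v <+: u
    · have hne : v ≠ u := by rintro rfl; exact lt_irrefl _ h
      exact absurd (prefix_padw_lt hvu hne) (fun hq => lt_asymm h hq)
    · have key := padE h hvu huv ([⊤] : List (WithTop X)) (padw v)
      rw [← padw_append] at key
      exact key

lemma append_padw_lt {u v : List X} (hv : v ≠ []) : padw (u ++ v) < padw u := by
  rw [padw_append, show padw u = mapw u ++ [⊤] from rfl, append_lt_append_iff']
  exact padw_lt_top hv

lemma lyndon_append {u v : List X} (hu : IsLyndon u) (hv : IsLyndon v)
    (h : padw v < padw u) : IsLyndon (u ++ v) := by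
  refine lyndon_of_suffix_lt (by simp [hu.1]) (fun s hs hsne hsnil => ?_)
  rcases suffix_decomp hs with hsv | ⟨u2, hu2, hu2ne, rfl⟩
  · rcases eq_or_ne s v with rfl | hne
    · exact padw_lt_append hu hv h
    · exact lt_trans (lyndon_suffix_lt hv hsv hne hsnil) (padw_lt_append hu hv h)
  · have hu2u : u2 ≠ u := by rintro rfl; exact hsne rfl
    have h2 := lyndon_suffix_lt hu hu2 hu2u hu2ne
    have hnp : ¬ u2 <+: u := fun hp => lt_asymm h2 (prefix_padw_lt hp hu2u)
    have hpn : ¬ u <+: u2 := fun hp => by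
      have h3 := List.IsPrefix.length_le hp
      have h4 := List.IsSuffix.length_le hu2
      exact hu2u (List.IsSuffix.eq_of_length hu2 (le_antisymm h4 h3))
    have key := padE h2 hnp hpn (padw v) (padw v)
    rw [← padw_append, ← padw_append] at key
    exact key

lemma exists_max_lyndon_prefix {s : List X} (hs : s ≠ []) :
    ∃ z, z <+: s ∧ IsLyndon z ∧ ∀ p, p <+: s → IsLyndon p → p.length ≤ z.length := by
  have hfin : {p : List X | p <+: s ∧ IsLyndon p}.Finite := by
    apply Set.Finite.subset (s.inits.finite_toSet)
    intro p hp
    exact (List.mem_inits p s).2 hp.1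
  have hne : {p : List X | p <+: s ∧ IsLyndon p}.Nonempty := by
    cases s with
    | nil => exact absurd rfl hs
    | cons a s' => exact ⟨[a], ⟨s', rfl⟩, isLyndon_singleton a⟩
  obtain ⟨z, hz, hzmax⟩ := Set.Finite.exists_maximalFor List.length _ hfin hne
  refine ⟨z, hz.1, hz.2, fun p hp hpl => ?_⟩
  by_contra hlt
  push_neg at hlt
  have := hzmax ⟨hp, hpl⟩ (le_of_lt hlt)
  omega

lemma llp_not_prefix_aux {w : List X} (hw : IsLyndon w) :
    ∀ n (s z : List X), s.length ≤ n → s <:+ w → s ≠ w → s ≠ [] →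
      z <+: s → IsLyndon z → (∀ p, p <+: s → IsLyndon p → p.length ≤ z.length) →
      ¬ z <+: w := by
  intro n
  induction n with
  | zero =>
    intro s z hn hs hsw hsnil
    exact absurd (List.length_eq_zero_iff.1 (Nat.le_zero.1 hn)) hsnil
  | succ n ih =>
    intro s z hn hs hsw hsnil hz hzl hzmax hzw
    have hslen : s.length ≤ w.length := List.IsSuffix.length_le hs
    have hswlen : s.length < w.length := by
      rcases lt_or_eq_of_le hslen with h | h
      · exact h
      · exact absurd (List.IsSuffix.eq_of_length hs h) hsw
    obtain ⟨m, rfl⟩ := hz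
    rcases eq_or_ne m [] with rfl | hm
    · rw [List.append_nil] at hs hsw hsnil hzmax hswlen
      have h1 := lyndon_suffix_lt hw hs hsw hsnil
      exact lt_asymm h1 (prefix_padw_lt hzw hsw)
    · obtain ⟨z', hz'p, hz'l, hz'max⟩ := exists_max_lyndon_prefix hm
      have hkey : ¬ padw z' < padw z := by
        intro hlt
        have hly := lyndon_append hzl hz'l hlt
        obtain ⟨m', rfl⟩ := hz'p
        have h5 := hzmax (z ++ z') ⟨m', by rw [List.append_assoc]⟩ hly
        rw [List.length_append] at h5
        have h6 : 0 < z'.length := List.length_pos_iff.2 hz'l.1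
        omega
      have hmw : m <:+ w := List.IsSuffix.trans (List.suffix_append z m) hs
      have hzlen : 0 < z.length := List.length_pos_iff.2 hzl.1
      have hmn : m.length ≤ n := by
        rw [List.length_append] at hn
        omega
      have hmnw : m ≠ w := by
        intro he
        have h7 := congrArg List.length he
        rw [List.length_append] at hswlen
        omega
      have ihm := ih m z' hmn hmw hmnw hm hz'p hz'l hz'max
      rcases factor_prefix_or_lt hw hmw hmnw hm hz'p with h' | h'
      · exact ihm h'
      · have hzw' : padw w < padw z := by
          refine prefix_padw_lt hzw ?_
          intro he
          rw [← he, List.length_append] at hswlen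
          omega
        exact hkey (lt_trans h' hzw')

lemma llp_not_prefix {w s z : List X} (hw : IsLyndon w) (hs : s <:+ w) (hsw : s ≠ w)
    (hsnil : s ≠ []) (hz : z <+: s) (hzl : IsLyndon z)
    (hzmax : ∀ p, p <+: s → IsLyndon p → p.length ≤ z.length) : ¬ z <+: w :=
  llp_not_prefix_aux hw s.length s z le_rfl hs hsw hsnil hz hzl hzmax

lemma exists_between_of_spanning {u v u2 v1 : List X} (hu : IsLyndon u) (hv : IsLyndon v)
    (hvu : padw v < padw u) (hu2 : u2 <:+ u) (hu2n : u2 ≠ []) (hv1 : v1 <+: v) (hv1n : v1 ≠ [])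
    (hwl : IsLyndon (u2 ++ v1)) (hne : u2 ++ v1 ≠ u ++ v) :
    ∃ z, IsLyndon z ∧ (z <:+: u ∨ z <:+: v) ∧ padw v < padw z ∧ padw z < padw u := by
  rcases eq_or_ne u2 u with rfl | hu2u
  · have hv1v : v1 ≠ v := by rintro rfl; exact hne rfl
    obtain ⟨z, hzp, hzl, hzmax⟩ := exists_max_lyndon_prefix hv1n
    have hzv : z <+: v := hzp.trans hv1
    have hzvne : z ≠ v := by
      intro he
      have h1 := List.IsPrefix.length_le hzp
      have h2 := List.IsPrefix.length_le hv1
      have h3 : v1.length < v.length := by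
        rcases lt_or_eq_of_le h2 with h | h
        · exact h
        · exact absurd (List.IsPrefix.eq_of_length hv1 h) hv1v
      rw [he] at h1
      omega
    refine ⟨z, hzl, Or.inr hzv.isInfix, prefix_padw_lt hzv hzvne, ?_⟩
    have hwsuf : v1 <:+ u2 ++ v1 := ⟨u2, rfl⟩
    have hv1w : v1 ≠ u2 ++ v1 := by
      intro he
      have := congrArg List.length he
      rw [List.length_append] at this
      have : 0 < u2.length := List.length_pos_iff.2 hu2n
      omega
    have hnp := llp_not_prefix hwl hwsuf hv1w hv1n hzp hzl hzmax
    rcases factor_prefix_or_lt hwl hwsuf hv1w hv1n hzp with h' | h'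
    · exact absurd h' hnp
    · exact lt_trans h' (append_padw_lt hv1n)
  · obtain ⟨z, hzp, hzl, hzmax⟩ := exists_max_lyndon_prefix hu2n
    refine ⟨z, hzl, Or.inl (hzp.isInfix.trans hu2.isInfix), ?_, ?_⟩
    · have h1 : padw v1 < padw (u2 ++ v1) := by
        refine lyndon_suffix_lt hwl ⟨u2, rfl⟩ ?_ hv1n
        intro he
        have := congrArg List.length he
        rw [List.length_append] at this
        have : 0 < u2.length := List.length_pos_iff.2 hu2n
        omega
      have h2 : padw (u2 ++ v1) < padw u2 := append_padw_lt hv1n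
      have h3 : padw v ≤ padw v1 := by
        rcases eq_or_ne v1 v with rfl | hne'
        · exact le_refl _
        · exact le_of_lt (prefix_padw_lt hv1 hne')
      have h4 : padw u2 ≤ padw z := by
        rcases eq_or_ne z u2 with rfl | hne'
        · exact le_refl _
        · exact le_of_lt (prefix_padw_lt hzp hne')
      calc padw v ≤ padw v1 := h3
        _ < padw (u2 ++ v1) := h1
        _ < padw u2 := h2
        _ ≤ padw z := h4
    · have hnp := llp_not_prefix hu hu2 hu2u hu2n hzp hzl hzmax
      rcases factor_prefix_or_lt hu hu2 hu2u hu2n hzp with h' | h'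
      · exact absurd h' hnp
      · exact h'

lemma consecutive_mem_phi {U : Set (List X)} (hU : IsClosedSet U) {u v : List X}
    (hu : u ∈ U) (hv : v ∈ U) (hvu : padw v < padw u)
    (hcons : ∀ x ∈ U, ¬ (padw v < padw x ∧ padw x < padw u)) : u ++ v ∈ Phi U := by
  have hlu := hU.1 u hu
  have hlv := hU.1 v hv
  have hly := lyndon_append hlu hlv hvu
  refine ⟨hly, ?_, ?_⟩
  · intro hmem
    exact hcons _ hmem ⟨padw_lt_append hlu hlv hvu, append_padw_lt hlv.1⟩
  · intro w hwl hwinf hwne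
    rcases infix_decomp hwinf with h | h | ⟨u2, v1, hu2, hv1, hu2n, hv1n, rfl⟩
    · exact hU.2.2 u hu w hwl h
    · exact hU.2.2 v hv w hwl h
    · exfalso
      obtain ⟨z, hzl, hzf, hz1, hz2⟩ :=
        exists_between_of_spanning hlu hlv hvu hu2 hu2n hv1 hv1n hwl hwne
      have hzU : z ∈ U := by
        rcases hzf with h | h
        · exact hU.2.2 u hu z hzl h
        · exact hU.2.2 v hv z hzl h
      exact hcons z hzU ⟨hz1, hz2⟩

lemma shirshov_left_lyndon {v1 v2 : List X} (hv : IsLyndon (v1 ++ v2))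
    (hsh : IsShirshov (v1 ++ v2) v1 v2) : IsLyndon v1 := by
  obtain ⟨-, h1n, h2n, h2l, hmax⟩ := hsh
  refine lyndon_of_suffix_lt h1n (fun s hs hsne hsnil => ?_)
  by_contra hcon
  have hlt : padw v1 < padw s := by
    rcases lt_trichotomy (padw s) (padw v1) with h | h | h
    · exact absurd h hcon
    · exact absurd (padw_injective h) hsne
    · exact h
  have hslen : s.length < v1.length := by
    have h1 := List.IsSuffix.length_le hs
    rcases lt_or_eq_of_le h1 with h | h
    · exact h
    · exact absurd (List.IsSuffix.eq_of_length hs h) hsne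
  have hsufv : s ++ v2 <:+ v1 ++ v2 := by
    obtain ⟨p, hp⟩ := hs
    exact ⟨p, by rw [← List.append_assoc, hp]⟩
  have hsufvne : s ++ v2 ≠ v1 ++ v2 := by
    intro he
    have := congrArg List.length he
    rw [List.length_append, List.length_append] at this
    omega
  by_cases hsp : s <+: v1
  · -- border case : s++v2 is a longer Lyndon proper suffix
    have hvs : padw (v1 ++ v2) < padw s := by
      refine prefix_padw_lt (hsp.trans (List.prefix_append v1 v2)) ?_
      intro he
      have := congrArg List.length he
      rw [List.length_append] at this
      have : 0 < v2.length := List.length_pos_iff.2 h2n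
      omega
    have hv2s : padw v2 < padw s := by
      have hv2v : padw v2 < padw (v1 ++ v2) := by
        refine lyndon_suffix_lt hv ⟨v1, rfl⟩ ?_ h2n
        intro he
        have := congrArg List.length he
        rw [List.length_append] at this
        have : 0 < v1.length := List.length_pos_iff.2 h1n
        omega
      exact lt_trans hv2v hvs
    have hA : padw v2 < padw (s ++ v2) := by
      by_cases hsv2 : s <+: v2
      · obtain ⟨mm, rfl⟩ := hsv2
        have hmn : mm ≠ [] := by
          rintro rfl
          rw [List.append_nil] at hv2s
          exact lt_irrefl _ hv2s
        rw [padw_append, padw_append, append_lt_append_iff']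
        refine lyndon_suffix_lt h2l ⟨s, rfl⟩ ?_ hmn
        intro he
        have := congrArg List.length he
        rw [List.length_append] at this
        have : 0 < s.length := List.length_pos_iff.2 hsnil
        omega
      · have hv2sp : ¬ v2 <+: s := by
          intro hp
          have hne' : v2 ≠ s := by rintro rfl; exact lt_irrefl _ hv2s
          exact lt_asymm hv2s (prefix_padw_lt hp hne')
        have key := padE hv2s hv2sp hsv2 ([⊤] : List (WithTop X)) (padw v2)
        rw [← padw_append] at key
        exact key
    have htl : IsLyndon (s ++ v2) := by
      refine lyndon_of_suffix_lt (by simp [hsnil]) (fun r hr hrne hrnil => ?_)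
      rcases suffix_decomp hr with hrv2 | ⟨s2, hs2, hs2n, rfl⟩
      · rcases eq_or_ne r v2 with rfl | hrne2
        · exact hA
        · exact lt_trans (lyndon_suffix_lt h2l hrv2 hrne2 hrnil) hA
      · have hs2s : s2 ≠ s := by rintro rfl; exact hrne rfl
        have hs2len : s2.length < s.length := by
          have h1 := List.IsSuffix.length_le hs2
          rcases lt_or_eq_of_le h1 with h | h
          · exact h
          · exact absurd (List.IsSuffix.eq_of_length hs2 h) hs2s
        have hrv : s2 ++ v2 <:+ v1 ++ v2 := by
          obtain ⟨q, hq⟩ := hs2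
          obtain ⟨p, hp⟩ := hs
          exact ⟨p ++ q, by rw [← List.append_assoc, List.append_assoc p q s2, hq, hp]⟩
        have hrvne : s2 ++ v2 ≠ v1 ++ v2 := by
          intro he
          have := congrArg List.length he
          rw [List.length_append, List.length_append] at this
          omega
        have h8 : padw (s2 ++ v2) < padw (v1 ++ v2) :=
          lyndon_suffix_lt hv hrv hrvne (by simp [h2n])
        have h9 : padw (s2 ++ v2) < padw s := lt_trans h8 hvs
        by_cases hsr : s <+: s2 ++ v2
        · obtain ⟨m', hm'⟩ := hsr
          have hm'len : m'.length < v2.length := by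
            have := congrArg List.length hm'
            rw [List.length_append, List.length_append] at this
            omega
          have hm'suf : m' <:+ s2 ++ v2 := ⟨s, hm'⟩
          have hm'v2 : m' <:+ v2 := by
            rcases suffix_decomp hm'suf with h | ⟨a2, ha2, ha2n, he⟩
            · exact h
            · exfalso
              have := congrArg List.length he
              rw [List.length_append] at this
              have : 0 < a2.length := List.length_pos_iff.2 ha2n
              omega
          have hm'n : m' ≠ [] := by
            rintro rfl
            rw [List.append_nil] at hm'
            rw [hm'] at h9
            exact lt_irrefl _ h9
          have hm'ne : m' ≠ v2 := by
            intro he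
            rw [he] at hm'len
            exact lt_irrefl _ hm'len
          rw [← hm', padw_append, padw_append, append_lt_append_iff']
          exact lyndon_suffix_lt h2l hm'v2 hm'ne hm'n
        · have hrs : ¬ (s2 ++ v2) <+: s := by
            intro hp
            have hne' : s2 ++ v2 ≠ s := by
              rintro he
              rw [he] at h9
              exact lt_irrefl _ h9
            exact lt_asymm h9 (prefix_padw_lt hp hne')
          have key := padE h9 hrs hsr ([⊤] : List (WithTop X)) (padw v2)
          rw [← padw_append] at key
          exact key
    have hcontra := hmax (s ++ v2) hsufv hsufvne htl
    rw [List.length_append] at hcontra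
    have : 0 < s.length := List.length_pos_iff.2 hsnil
    omega
  · -- non-prefix case
    have hnp : ¬ v1 <+: s := by
      intro hp
      have := List.IsPrefix.length_le hp
      omega
    have key := padE hlt hnp hsp (padw v2) (padw v2)
    rw [← padw_append, ← padw_append] at key
    have h10 : padw (s ++ v2) < padw (v1 ++ v2) :=
      lyndon_suffix_lt hv hsufv hsufvne (by simp [hsnil])
    exact lt_asymm key h10

lemma phi_subset_phiBar {U : Set (List X)} (hU : IsClosedSet U) : Phi U ⊆ PhiBar U := by
  rintro v ⟨hvl, hvU, hfac⟩
  refine ⟨hvl, hvU, ?_⟩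
  have hvn := hvl.1
  have hv2 : 2 ≤ v.length := by
    rcases v with - | ⟨a, t⟩
    · exact absurd rfl hvn
    · rcases t with - | ⟨b, t⟩
      · exact absurd (hU.2.1 a) hvU
      · simp
  have hfin : {s : List X | s <:+ v ∧ s ≠ v ∧ IsLyndon s}.Finite := by
    apply Set.Finite.subset (v.tails.finite_toSet)
    intro p hp
    exact (List.mem_tails p v).2 hp.1
  have hne : {s : List X | s <:+ v ∧ s ≠ v ∧ IsLyndon s}.Nonempty := by
    refine ⟨[v.getLast hvn], ?_, ?_, isLyndon_singleton _⟩
    · exact ⟨v.dropLast, List.dropLast_append_getLast hvn⟩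
    · intro he
      have := congrArg List.length he
      simp at this
      omega
  obtain ⟨v2, hv2mem, hv2max⟩ := Set.Finite.exists_maximalFor List.length _ hfin hne
  obtain ⟨hv2suf, hv2ne, hv2l⟩ := hv2mem
  obtain ⟨v1, hv1⟩ := hv2suf
  have hv1n : v1 ≠ [] := by
    rintro rfl
    exact hv2ne hv1
  have hmaxlen : ∀ s, s <:+ v → s ≠ v → IsLyndon s → s.length ≤ v2.length := by
    intro s hsuf hsne hsl
    by_contra hlt
    push_neg at hlt
    have := hv2max ⟨hsuf, hsne, hsl⟩ (le_of_lt hlt)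
    omega
  have hsh : IsShirshov v v1 v2 := ⟨hv1.symm, hv1n, hv2l.1, hv2l, hmaxlen⟩
  have hsh' : IsShirshov (v1 ++ v2) v1 v2 := by rw [hv1]; exact hsh
  have hv' : IsLyndon (v1 ++ v2) := by rw [hv1]; exact hvl
  have hv1l : IsLyndon v1 := shirshov_left_lyndon hv' hsh'
  refine ⟨v1, v2, hsh, ?_, ?_⟩
  · refine hfac v1 hv1l ?_ ?_
    · exact (List.IsPrefix.isInfix ⟨v2, hv1⟩)
    · intro he
      rw [he] at hv1
      have := congrArg List.length hv1
      rw [List.length_append] at this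
      have : 0 < v2.length := List.length_pos_iff.2 hv2l.1
      omega
  · exact hfac v2 hv2l (List.IsSuffix.isInfix ⟨v1, hv1⟩) hv2ne

theorem card_phi_bounds (U : Set (List X)) (hU : IsClosedSet U) (hfin : U.Finite)
    (d : ℕ) (hd : U.ncard = d) :
    d - 1 ≤ (Phi U).ncard ∧ (Phi U).ncard ≤ (PhiBar U).ncard ∧
      (PhiBar U).ncard ≤ d * (d - 1) / 2 := by
  classical
  set T : Set (List X × List X) := {p | p.1 ∈ U ∧ p.2 ∈ U ∧ padw p.2 < padw p.1} with hT
  have hTfin : T.Finite := (hfin.prod hfin).subset (fun p hp => ⟨hp.1, hp.2.1⟩)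
  have hchoice : ∀ v ∈ PhiBar U, ∃ p : List X × List X, p ∈ T ∧ v = p.1 ++ p.2 := by
    rintro v ⟨hvl, hvU, v1, v2, hsh, h1U, h2U⟩
    obtain ⟨he, h1n, h2n, h2l, -⟩ := hsh
    subst he
    have hv2v : padw v2 < padw (v1 ++ v2) := by
      refine lyndon_suffix_lt hvl ⟨v1, rfl⟩ ?_ h2n
      intro h
      have h5 := congrArg List.length h
      rw [List.length_append] at h5
      have h6 := List.length_pos_iff.2 h1n
      omega
    have hvv1 : padw (v1 ++ v2) < padw v1 := append_padw_lt h2n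
    exact ⟨(v1, v2), ⟨h1U, h2U, lt_trans hv2v hvv1⟩, rfl⟩
  choose! f hfT hfv using hchoice
  have hinj : Set.InjOn f (PhiBar U) := by
    intro a ha b hb he
    rw [hfv a ha, hfv b hb, he]
  have himg : f '' (PhiBar U) ⊆ T := by
    rintro - ⟨x, hx, rfl⟩
    exact hfT x hx
  have hBfin : (PhiBar U).Finite := Set.Finite.of_finite_image (hTfin.subset himg) hinj
  have hBle : (PhiBar U).ncard ≤ T.ncard := Set.ncard_le_ncard_of_injOn f hfT hinj hTfin
  have hTbound : T.ncard ≤ d * (d - 1) / 2 := by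
    set F := hfin.toFinset with hF
    have hFcard : F.card = d := by
      rw [hF, ← hd]
      exact (Set.ncard_eq_toFinset_card _ hfin).symm
    set A := F.offDiag.filter (fun p => padw p.2 < padw p.1) with hA
    have hTA : T = ↑A := by
      ext p
      simp only [hT, Set.mem_setOf_eq, hA, Finset.coe_filter, Finset.mem_offDiag,
        Set.Finite.mem_toFinset, Set.mem_setOf_eq, hF]
      constructor
      · rintro ⟨h1, h2, h3⟩
        exact ⟨⟨h1, h2, fun he => by rw [he] at h3; exact lt_irrefl _ h3⟩, h3⟩
      · rintro ⟨⟨h1, h2, -⟩, h3⟩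
        exact ⟨h1, h2, h3⟩
    have hsplit : A.card + (F.offDiag.filter (fun p => ¬ padw p.2 < padw p.1)).card
        = F.offDiag.card := Finset.card_filter_add_card_filter_not _
    have hswap : (F.offDiag.filter (fun p => ¬ padw p.2 < padw p.1)).card = A.card := by
      refine Finset.card_bij' (fun p _ => (p.2, p.1)) (fun p _ => (p.2, p.1)) ?_ ?_ ?_ ?_
      · intro p hp
        simp only [hA, Finset.mem_filter, Finset.mem_offDiag] at hp ⊢
        obtain ⟨⟨h1, h2, h3⟩, h4⟩ := hp
        refine ⟨⟨h2, h1, fun he => h3 he.symm⟩, ?_⟩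
        rcases lt_trichotomy (padw p.1) (padw p.2) with h | h | h
        · exact h
        · exact absurd (padw_injective h) h3
        · exact absurd h h4
      · intro p hp
        simp only [hA, Finset.mem_filter, Finset.mem_offDiag] at hp ⊢
        obtain ⟨⟨h1, h2, h3⟩, h4⟩ := hp
        exact ⟨⟨h2, h1, fun he => h3 he.symm⟩, fun h => lt_asymm h4 h⟩
      · intro p hp
        rfl
      · intro p hp
        rfl
    have hoff : F.offDiag.card = d * d - d := by rw [Finset.offDiag_card, hFcard]
    have hdd : d * d - d = d * (d - 1) := by rw [Nat.mul_sub, Nat.mul_one]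
    have h2A : A.card * 2 = d * (d - 1) := by omega
    have hAcard : d * (d - 1) / 2 = A.card := Nat.div_eq_of_eq_mul_left (by norm_num) h2A.symm
    rw [hTA, Set.ncard_coe_finset, hAcard]
  have hsub := phi_subset_phiBar hU
  have hPle : (Phi U).ncard ≤ (PhiBar U).ncard := Set.ncard_le_ncard hsub hBfin
  have hPart1 : d - 1 ≤ (Phi U).ncard := by
    rcases Nat.eq_zero_or_pos d with rfl | hd0
    · omega
    · have hUne : U.Nonempty := by
        rw [← Set.ncard_pos hfin, hd]
        exact hd0
      obtain ⟨m, hmU, hmmin⟩ := Set.Finite.exists_minimalFor padw U hfin hUne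
      have hmin : ∀ x ∈ U, x ≠ m → padw m < padw x := by
        intro x hx hne
        rcases lt_trichotomy (padw m) (padw x) with h | h | h
        · exact h
        · exact absurd (padw_injective h).symm hne
        · exact absurd (hmmin hx (le_of_lt h)) (not_le.2 h)
      have hpred : ∀ u ∈ U \ {m}, ∃ p, p ∈ U ∧ padw p < padw u ∧
          ∀ x ∈ U, padw x < padw u → padw x ≤ padw p := by
        intro u hu
        have hPfin : {x | x ∈ U ∧ padw x < padw u}.Finite :=
          hfin.subset (fun x hx => hx.1)
        have hPne : {x | x ∈ U ∧ padw x < padw u}.Nonempty :=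
          ⟨m, hmU, hmin u hu.1 (fun he => hu.2 (by simp [he]))⟩
        obtain ⟨p, hp, hpmax⟩ := Set.Finite.exists_maximalFor padw _ hPfin hPne
        refine ⟨p, hp.1, hp.2, fun x hx hxu => ?_⟩
        rcases le_or_gt (padw x) (padw p) with h | h
        · exact h
        · exact absurd (hpmax ⟨hx, hxu⟩ (le_of_lt h)) (not_le.2 h)
      choose! pred hpU hplt hpmax using hpred
      have hmaps : ∀ u ∈ U \ {m}, u ++ pred u ∈ Phi U := by
        intro u hu
        refine consecutive_mem_phi hU hu.1 (hpU u hu) (hplt u hu) ?_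
        rintro x hx ⟨h1, h2⟩
        exact absurd (hpmax u hu x hx h2) (not_le.2 h1)
      have key : ∀ a b, a ∈ U \ {m} → b ∈ U \ {m} → a ++ pred a = b ++ pred b →
          padw b < padw a → False := by
        intro a b ha hb he hba
        have hble : padw b ≤ padw (pred a) := hpmax a ha b hb.1 hba
        have hal : IsLyndon a := hU.1 a ha.1
        have hbl : IsLyndon b := hU.1 b hb.1
        have hpbl : IsLyndon (pred b) := hU.1 _ (hpU b hb)
        rcases List.append_eq_append_iff.1 he with ⟨t, ht1, ht2⟩ | ⟨t, ht1, ht2⟩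
        · rcases eq_or_ne t [] with rfl | htn
          · rw [List.append_nil] at ht1
            rw [ht1] at hba
            exact lt_irrefl _ hba
          · have h1 : padw t < padw b := by
              refine lyndon_suffix_lt hbl ⟨a, ht1.symm⟩ ?_ htn
              intro hte
              rw [← hte] at ht1
              have h5 := congrArg List.length ht1
              rw [List.length_append] at h5
              have h6 := List.length_pos_iff.2 hal.1
              omega
            have h2 : padw (pred a) < padw t := by
              refine prefix_padw_lt ⟨pred b, ht2.symm⟩ ?_
              intro hte
              rw [hte] at ht2
              have h5 := congrArg List.length ht2
              rw [List.length_append] at h5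
              have h6 := List.length_pos_iff.2 hpbl.1
              omega
            exact lt_irrefl _ (lt_of_lt_of_le (lt_trans h2 h1) hble)
        · rcases eq_or_ne t [] with rfl | htn
          · rw [List.append_nil] at ht1
            rw [ht1] at hba
            exact lt_irrefl _ hba
          · have hbna : b ≠ a := fun he' => by rw [he'] at hba; exact lt_irrefl _ hba
            exact lt_asymm hba (prefix_padw_lt ⟨t, ht1.symm⟩ hbna)
      have hinj1 : Set.InjOn (fun u => u ++ pred u) (U \ {m}) := by
        intro a ha b hb he
        by_contra hne
        rcases lt_trichotomy (padw a) (padw b) with h | h | h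
        · exact key b a hb ha he.symm h
        · exact hne (padw_injective h)
        · exact key a b ha hb he h
      have hPhifin : (Phi U).Finite := hBfin.subset hsub
      have hle := Set.ncard_le_ncard_of_injOn _ hmaps hinj1 hPhifin
      rw [Set.ncard_diff_singleton_of_mem hmU, hd] at hle
      exact hle
  exact ⟨hPart1, hPle, le_trans hBle hTbound⟩
end

section
/- For p ≥ 2, the set U_p = {f_0, f_1, ..., f_{p-1}} of the first p Fibonacci words is a closed set of Lyndon words and #Φ(U_p) = p − 1 (the minimum possible for a closed set of cardinality p). -/
variable {X : Type*} [LinearOrder X]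

/-- The Fibonacci words on the two-letter alphabet `Bool` with `false < true`:
`f 0 = [false]`, `f 1 = [true]`, `f (2r) = f (2r-1) ++ f (2r-2)`, `f (2r+1) = f (2r-1) ++ f (2r)`. -/
def fibWord : ℕ → List Bool
  | 0 => [false]
  | 1 => [true]
  | (n + 2) => if n % 2 = 0 then fibWord (n + 1) ++ fibWord n else fibWord n ++ fibWord (n + 1)

namespace FibAux

/-! ### Lex order basics -/

theorem lexLt_nil_left (v : List Bool) : ¬ LexLt ([] : List Bool) v := by
  rintro (⟨r, s, t, a, b, hab, h1, h2⟩ | ⟨h1, h2⟩)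
  · exact absurd h1 (by simp)
  · exact h2 (List.prefix_nil.mp h1)

theorem lexLt_nil_right {u : List Bool} (h : u ≠ []) : LexLt u ([] : List Bool) :=
  Or.inr ⟨List.nil_prefix, fun he => h he.symm⟩

theorem lexLt_cons {a b : Bool} {u v : List Bool} :
    LexLt (a :: u) (b :: v) ↔ a < b ∨ (a = b ∧ LexLt u v) := by
  constructor
  · rintro (⟨r, s, t, x, y, hxy, h1, h2⟩ | ⟨h1, h2⟩)
    · cases r with
      | nil =>
        simp only [List.nil_append, List.cons.injEq] at h1 h2
        exact Or.inl (h1.1 ▸ h2.1 ▸ hxy)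
      | cons c r' =>
        simp only [List.cons_append, List.cons.injEq] at h1 h2
        exact Or.inr ⟨h1.1.trans h2.1.symm,
          Or.inl ⟨r', s, t, x, y, hxy, h1.2, h2.2⟩⟩
    · rw [List.cons_prefix_cons] at h1
      refine Or.inr ⟨h1.1.symm, Or.inr ⟨h1.2, fun hvu => h2 ?_⟩⟩
      rw [h1.1, hvu]
  · rintro (hab | ⟨rfl, hlt⟩)
    · exact Or.inl ⟨[], u, v, a, b, hab, rfl, rfl⟩
    · rcases hlt with ⟨r, s, t, x, y, hxy, h1, h2⟩ | ⟨h1, h2⟩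
      · exact Or.inl ⟨a :: r, s, t, x, y, hxy, by rw [h1]; rfl, by rw [h2]; rfl⟩
      · exact Or.inr ⟨List.cons_prefix_cons.mpr ⟨rfl, h1⟩, by simpa using h2⟩

theorem lexLt_irrefl (u : List Bool) : ¬ LexLt u u := by
  induction u with
  | nil => exact lexLt_nil_left _
  | cons a u ih =>
    rw [lexLt_cons]
    rintro (h | ⟨-, h⟩)
    · exact lt_irrefl _ h
    · exact ih h

theorem lexLt_trans : ∀ {u v w : List Bool}, LexLt u v → LexLt v w → LexLt u w := by
  intro u
  induction u with
  | nil => intro v w h _; exact absurd h (lexLt_nil_left _)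
  | cons a u ih =>
    intro v w h1 h2
    cases v with
    | nil => exact absurd h2 (lexLt_nil_left _)
    | cons b v =>
      cases w with
      | nil => exact lexLt_nil_right (by simp)
      | cons c w =>
        rw [lexLt_cons] at h1 h2 ⊢
        rcases h1 with h1 | ⟨rfl, h1⟩
        · rcases h2 with h2 | ⟨rfl, h2⟩
          · exact Or.inl (h1.trans h2)
          · exact Or.inl h1
        · rcases h2 with h2 | ⟨rfl, h2⟩
          · exact Or.inl h2
          · exact Or.inr ⟨rfl, ih h1 h2⟩

theorem lexLt_asymm {u v : List Bool} (h : LexLt u v) : ¬ LexLt v u :=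
  fun h' => lexLt_irrefl u (lexLt_trans h h')

theorem lexLt_total : ∀ (u v : List Bool), u = v ∨ LexLt u v ∨ LexLt v u := by
  intro u
  induction u with
  | nil =>
    intro v
    cases v with
    | nil => exact Or.inl rfl
    | cons b v => exact Or.inr (Or.inr (lexLt_nil_right (by simp)))
  | cons a u ih =>
    intro v
    cases v with
    | nil => exact Or.inr (Or.inl (lexLt_nil_right (by simp)))
    | cons b v =>
      rcases lt_trichotomy a b with h | rfl | h
      · exact Or.inr (Or.inl (lexLt_cons.mpr (Or.inl h)))
      · rcases ih v with rfl | h | h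
        · exact Or.inl rfl
        · exact Or.inr (Or.inl (lexLt_cons.mpr (Or.inr ⟨rfl, h⟩)))
        · exact Or.inr (Or.inr (lexLt_cons.mpr (Or.inr ⟨rfl, h⟩)))
      · exact Or.inr (Or.inr (lexLt_cons.mpr (Or.inl h)))

theorem lexLt_append_iff {x u v : List Bool} :
    LexLt (x ++ u) (x ++ v) ↔ LexLt u v := by
  induction x with
  | nil => simp
  | cons a x ih => simpa [lexLt_cons] using ih

/-- The "letter difference" strict comparison. -/
def LexDiff (u v : List Bool) : Prop :=
  ∃ (r s t : List Bool) (a b : Bool), a < b ∧ u = r ++ a :: s ∧ v = r ++ b :: t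

theorem LexDiff.lexLt {u v : List Bool} (h : LexDiff u v) : LexLt u v := Or.inl h

theorem lexLt_cases {u v : List Bool} (h : LexLt u v) :
    LexDiff u v ∨ (v <+: u ∧ v ≠ u) := h

theorem LexDiff.append {u v x y : List Bool} (h : LexDiff u v) :
    LexDiff (u ++ x) (v ++ y) := by
  obtain ⟨r, s, t, a, b, hab, rfl, rfl⟩ := h
  exact ⟨r, s ++ x, t ++ y, a, b, hab, by simp, by simp⟩

theorem LexDiff.append_left {u v x : List Bool} (h : LexDiff u v) :
    LexDiff (u ++ x) v := by
  obtain ⟨r, s, t, a, b, hab, rfl, rfl⟩ := h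
  exact ⟨r, s ++ x, t, a, b, hab, by simp, rfl⟩

theorem LexDiff.append_right {u v y : List Bool} (h : LexDiff u v) :
    LexDiff u (v ++ y) := by
  obtain ⟨r, s, t, a, b, hab, rfl, rfl⟩ := h
  exact ⟨r, s, t ++ y, a, b, hab, rfl, by simp⟩

theorem prefix_lexLt {u v : List Bool} (h : u <+: v) (hne : u ≠ v) : LexLt v u :=
  Or.inr ⟨h, hne⟩

/-- if `u < v` and `v` is not longer than `u` is impossible unless letter-diff -/
theorem lexLt_lexDiff_of_length {u v : List Bool} (h : LexLt u v)
    (hl : u.length < v.length) : LexDiff u v := by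
  rcases h with h | ⟨h1, _⟩
  · exact h
  · exact absurd h1.length_le (by omega)

theorem lexLt_lexDiff_of_length_eq {u v : List Bool} (h : LexLt u v)
    (hl : u.length = v.length) : LexDiff u v := by
  rcases h with h | ⟨h1, h2⟩
  · exact h
  · exact absurd (h1.eq_of_length hl.symm) h2


/-! ### Lyndon characterization via suffixes -/

theorem suffix_append_cases {s u v : List Bool} (h : s <:+ u ++ v) :
    s <:+ v ∨ ∃ s', s = s' ++ v ∧ s' <:+ u := by
  rcases List.suffix_or_suffix_of_suffix h (List.suffix_append u v) with h1 | h1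
  · exact Or.inl h1
  · obtain ⟨s', rfl⟩ := h1
    right
    refine ⟨s', rfl, ?_⟩
    obtain ⟨p, hp⟩ := h
    rw [← List.append_assoc] at hp
    exact ⟨p, List.append_cancel_right hp⟩

theorem lyndon_iff_suffix {u : List Bool} :
    IsLyndon u ↔ u ≠ [] ∧ ∀ s, s <:+ u → s ≠ [] → s ≠ u → LexLt s u := by
  constructor
  · rintro ⟨hne, hrot⟩
    refine ⟨hne, fun s hs hsne hsnu => ?_⟩
    obtain ⟨p, hp⟩ := hs
    have hpne : p ≠ [] := by
      rintro rfl; exact hsnu (by simpa using hp)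
    have h1 : LexLt (s ++ p) u := hrot p s hp.symm hpne hsne
    by_contra hcon
    rcases lexLt_total s u with rfl | h | h
    · exact hsnu rfl
    · exact hcon h
    · rcases lexLt_cases h with hd | ⟨hpre, hne2⟩
      · exact lexLt_asymm (hd.append_right (y := p)).lexLt h1
      · obtain ⟨t, ht⟩ := hpre
        have htne : t ≠ [] := by rintro rfl; exact hne2 (by simpa using ht)
        have h2 : LexLt (t ++ s) u := hrot s t ht.symm hsne htne
        have h3 : LexLt p t := by
          rw [← ht] at h1; exact lexLt_append_iff.mp h1
        have hlen : p.length = t.length := by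
          have l1 := congrArg List.length hp
          have l2 := congrArg List.length ht
          simp at l1 l2; omega
        have hd : LexDiff p t := lexLt_lexDiff_of_length_eq h3 hlen
        have hlast : LexLt (p ++ s) (t ++ s) := (hd.append (x := s) (y := s)).lexLt
        rw [hp] at hlast
        exact lexLt_asymm hlast h2
  · rintro ⟨hne, hsuf⟩
    refine ⟨hne, fun v w huvw hvne hwne => ?_⟩
    have hw : w <:+ u := ⟨v, huvw.symm⟩
    have hlen : w.length < u.length := by
      have h0 := congrArg List.length huvw
      simp at h0
      have : v.length ≠ 0 := by simpa using hvne
      omega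
    have h1 : LexLt w u := hsuf w hw hwne (by
      intro h; rw [h] at hlen; omega)
    have hd : LexDiff w u := lexLt_lexDiff_of_length h1 hlen
    exact (hd.append_left (x := v)).lexLt

theorem lyndonSuffixLt {u s : List Bool} (h : IsLyndon u) (hs : s <:+ u)
    (h1 : s ≠ []) (h2 : s ≠ u) : LexLt s u :=
  (lyndon_iff_suffix.mp h).2 s hs h1 h2

theorem lyndon_singleton (a : Bool) : IsLyndon [a] := by
  refine ⟨by simp, fun v w h hv hw => ?_⟩
  have := congrArg List.length h
  simp at this
  have hv' : v.length ≠ 0 := by simpa using hv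
  have hw' : w.length ≠ 0 := by simpa using hw
  omega

/-- Concatenation of Lyndon words: if `v < u` then `u ++ v` is Lyndon. -/
theorem lyndon_append {u v : List Bool} (hu : IsLyndon u) (hv : IsLyndon v)
    (hlt : LexLt v u) : IsLyndon (u ++ v) := by
  have hune := hu.1
  have hvne := hv.1
  have hvuv : LexLt v (u ++ v) := by
    rcases lexLt_cases hlt with hd | ⟨hpre, hne⟩
    · exact (hd.append_right (y := v)).lexLt
    · obtain ⟨v', rfl⟩ := hpre
      have hv'ne : v' ≠ [] := by rintro rfl; exact hne (by simp)
      have h1 : LexLt v' (u ++ v') := lyndonSuffixLt hv ⟨u, rfl⟩ hv'ne (by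
        intro h
        exact hune (List.self_eq_append_left.mp h))
      exact lexLt_append_iff.mpr h1
  rw [lyndon_iff_suffix]
  refine ⟨by simp [hune], fun s hs hsne hsnu => ?_⟩
  rcases suffix_append_cases hs with h1 | ⟨s', rfl, hs'⟩
  · -- s suffix of v
    rcases eq_or_ne s v with rfl | hne
    · exact hvuv
    · exact lexLt_trans (lyndonSuffixLt hv h1 hsne hne) hvuv
  · -- s = s' ++ v with s' suffix of u
    rcases eq_or_ne s' ([] : List Bool) with rfl | hs'ne
    · simpa using hvuv
    rcases eq_or_ne s' u with rfl | hne
    · exact absurd rfl hsnu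
    · have h1 : LexLt s' u := lyndonSuffixLt hu hs' hs'ne hne
      have hlen : s'.length < u.length := by
        have := hs'.length_le
        rcases lt_or_eq_of_le this with h | h
        · exact h
        · exact absurd (hs'.eq_of_length h) hne
      exact ((lexLt_lexDiff_of_length h1 hlen).append (x := v) (y := v)).lexLt

/-- A Lyndon word is smaller than its proper prefixes, larger than proper suffixes;
    in particular for `u ++ w` Lyndon, `w < u`. -/
theorem lyndon_append_lt {u w : List Bool} (h : IsLyndon (u ++ w))
    (hu : u ≠ []) (hw : w ≠ []) : LexLt w u := by
  have h1 : LexLt w (u ++ w) := lyndonSuffixLt h ⟨u, rfl⟩ hw (by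
    intro he
    exact hu (List.self_eq_append_left.mp he))
  have h2 : LexLt (u ++ w) u := prefix_lexLt ⟨w, rfl⟩ (by
    intro he
    exact hw (List.append_right_eq_self.mp he.symm))
  exact lexLt_trans h1 h2

/-! ### maximal suffix and standard factorization -/

theorem exists_max_suffix : ∀ (v : List Bool), v ≠ [] →
    ∃ w, w <:+ v ∧ w ≠ [] ∧ ∀ t, t <:+ v → t ≠ [] → t = w ∨ LexLt t w := by
  intro v
  induction v with
  | nil => intro h; exact absurd rfl h
  | cons a v ih =>
    intro _
    rcases eq_or_ne v [] with rfl | hv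
    · refine ⟨[a], List.suffix_refl _, by simp, fun t ht htne => ?_⟩
      rcases List.suffix_cons_iff.mp ht with rfl | ht
      · exact Or.inl rfl
      · exact absurd (List.suffix_nil.mp ht) htne
    · obtain ⟨w, hw, hwne, hmax⟩ := ih hv
      rcases lexLt_total (a :: v) w with he | h | h
      · refine ⟨w, hw.trans (List.suffix_cons a v), hwne, fun t ht htne => ?_⟩
        rcases List.suffix_cons_iff.mp ht with rfl | ht
        · exact Or.inl he
        · exact hmax t ht htne
      · refine ⟨w, hw.trans (List.suffix_cons a v), hwne, fun t ht htne => ?_⟩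
        rcases List.suffix_cons_iff.mp ht with rfl | ht
        · exact Or.inr h
        · exact hmax t ht htne
      · refine ⟨a :: v, List.suffix_refl _, by simp, fun t ht htne => ?_⟩
        rcases List.suffix_cons_iff.mp ht with rfl | ht
        · exact Or.inl rfl
        · rcases hmax t ht htne with rfl | h2
          · exact Or.inr h
          · exact Or.inr (lexLt_trans h2 h)

/-- Duval-style factorization: every Lyndon word of length ≥ 2 is a product of two
    shorter Lyndon words `u ++ w` with `w < u`. -/
theorem lyndon_factorization {v : List Bool} (hv : IsLyndon v) (h2 : 2 ≤ v.length) :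
    ∃ u w, v = u ++ w ∧ u ≠ [] ∧ w ≠ [] ∧ IsLyndon u ∧ IsLyndon w ∧ LexLt w u := by
  obtain ⟨x, v', rfl⟩ : ∃ x v', v = x :: v' := by
    cases v with
    | nil => simp at h2
    | cons x v' => exact ⟨x, v', rfl⟩
  have hv'ne : v' ≠ [] := by
    rintro rfl; simp at h2
  obtain ⟨w, hw, hwne, hmax⟩ := exists_max_suffix v' hv'ne
  -- w is a suffix of x :: v' and proper
  have hwsuf : w <:+ x :: v' := hw.trans (List.suffix_cons x v')
  obtain ⟨u, hu⟩ := hwsuf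
  have hune : u ≠ [] := by
    rintro rfl
    simp only [List.nil_append] at hu
    rw [hu] at hw
    have := hw.length_le
    simp at this
  -- proper suffixes of x :: v' that are nonempty and ≠ whole are suffixes of v'
  have hproper : ∀ t, t <:+ x :: v' → t ≠ [] → t ≠ x :: v' → (t = w ∨ LexLt t w) := by
    intro t ht htne htnv
    rcases List.suffix_cons_iff.mp ht with rfl | ht
    · exact absurd rfl htnv
    · exact hmax t ht htne
  -- w is Lyndon
  have hwlyndon : IsLyndon w := by
    rw [lyndon_iff_suffix]
    refine ⟨hwne, fun t ht htne htnw => ?_⟩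
    have ht' : t <:+ v' := ht.trans hw
    rcases hmax t (ht') htne with rfl | h
    · exact absurd rfl htnw
    · exact h
  -- u is Lyndon
  have hulyndon : IsLyndon u := by
    rw [lyndon_iff_suffix]
    refine ⟨hune, fun s hs hsne hsnu => ?_⟩
    by_contra hcon
    rcases lexLt_total s u with rfl | h | h
    · exact hsnu rfl
    · exact hcon h
    · -- u < s
      rcases lexLt_cases h with hd | ⟨hpre, hne2⟩
      · -- letter diff: u++w < s++w, but s++w is proper suffix of v so s++w < v = u++w
        have h1 : LexLt (u ++ w) (s ++ w) := (hd.append (x := w) (y := w)).lexLt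
        have hsw : s ++ w <:+ x :: v' := by
          obtain ⟨p, hp⟩ := hs
          exact ⟨p, by rw [← hu, ← hp]; simp⟩
        have hswne : s ++ w ≠ x :: v' := fun he =>
          hsnu (List.append_cancel_right (he.trans hu.symm))
        have h2 : LexLt (s ++ w) (x :: v') :=
          lyndonSuffixLt hv hsw (by simp [hsne]) hswne
        rw [← hu] at h2
        exact lexLt_asymm h1 h2
      · -- s proper prefix of u: border
        obtain ⟨u', hu'⟩ := hpre
        have hu'ne : u' ≠ [] := by rintro rfl; exact hne2 (by simpa using hu')
        -- s ++ w proper suffix of v, so s ++ w < v = s ++ (u' ++ w)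
        have hsw : s ++ w <:+ x :: v' := by
          obtain ⟨p, hp⟩ := hs
          exact ⟨p, by rw [← hu, ← hp]; simp⟩
        have hswne : s ++ w ≠ x :: v' := fun he =>
          hsnu (List.append_cancel_right (he.trans hu.symm))
        have h2 : LexLt (s ++ w) (x :: v') := lyndonSuffixLt hv hsw (by simp [hsne]) hswne
        have h3 : LexLt (s ++ w) (s ++ (u' ++ w)) := by
          rw [← hu, ← hu'] at h2; simpa using h2
        have h4 : LexLt w (u' ++ w) := lexLt_append_iff.mp h3
        -- but u' ++ w is a proper nonempty suffix of v', so u' ++ w ≤ w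
        have h5 : u' ++ w <:+ v' := by
          -- u' ++ w is a suffix of u ++ w = x :: v' of length < |x :: v'|
          have hsuf2 : u' ++ w <:+ x :: v' := by
            rw [← hu, ← hu']; exact ⟨s, by simp⟩
          rcases List.suffix_cons_iff.mp hsuf2 with he | h
          · exfalso
            have h7 : u' = u := List.append_cancel_right (he.trans hu.symm)
            rw [h7] at hu'
            exact hsne (List.append_left_eq_self.mp hu')
          · exact h
        rcases hmax _ h5 (by simp [hwne]) with he | h6
        · -- u' ++ w = w impossible
          exact hu'ne (List.append_left_eq_self.mp he)
        · exact lexLt_asymm h4 h6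
  -- w < u
  have hwltu : LexLt w u := by
    rw [← hu] at hv
    exact lyndon_append_lt hv hune hwne
  exact ⟨u, w, hu.symm, hune, hwne, hulyndon, hwlyndon, hwltu⟩


/-! ### Fibonacci words: recursions and basic structure -/

theorem fib_even (k : ℕ) : fibWord (2*k+2) = fibWord (2*k+1) ++ fibWord (2*k) := by
  rw [show 2*k+2 = (2*k)+2 from rfl, fibWord, if_pos (by omega : (2*k) % 2 = 0)]

theorem fib_odd (k : ℕ) : fibWord (2*k+3) = fibWord (2*k+1) ++ fibWord (2*k+2) := by
  rw [show 2*k+3 = (2*k+1)+2 from rfl, fibWord, if_neg (by omega : ¬ (2*k+1) % 2 = 0)]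

theorem fib0 : fibWord 0 = [false] := rfl
theorem fib1 : fibWord 1 = [true] := rfl
theorem fib2 : fibWord 2 = [true, false] := rfl
theorem fib3 : fibWord 3 = [true, true, false] := rfl

theorem fib_ne_nil (m : ℕ) : fibWord m ≠ [] := by
  induction m using Nat.strong_induction_on with
  | _ m ih =>
    match m with
    | 0 => simp [fib0]
    | 1 => simp [fib1]
    | (n+2) =>
      rw [fibWord]
      split <;> simp [ih n (by omega)]

/-- the substitution  true ↦ [true,true,false], false ↦ [true,false] -/
def sig : List Bool → List Bool
  | [] => []
  | a :: w => (if a then [true, true, false] else [true, false]) ++ sig w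

theorem sig_nil : sig [] = [] := rfl
theorem sig_false (w : List Bool) : sig (false :: w) = true :: false :: sig w := rfl
theorem sig_true (w : List Bool) : sig (true :: w) = true :: true :: false :: sig w := rfl

theorem sig_append (u v : List Bool) : sig (u ++ v) = sig u ++ sig v := by
  induction u with
  | nil => rfl
  | cons a u ih => cases a <;> simp [sig_false, sig_true, ih]

theorem sig_fib (m : ℕ) : sig (fibWord m) = fibWord (m + 2) := by
  induction m using Nat.strong_induction_on with
  | _ m ih =>
    match m with
    | 0 => rfl
    | 1 => rfl
    | (n+2) =>
      rcases Nat.even_or_odd' n with ⟨k, rfl | rfl⟩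
      · rw [show 2*k+2+2 = 2*(k+1)+2 from rfl, fib_even, fib_even (k+1), sig_append,
          ih (2*k+1) (by omega), ih (2*k) (by omega)]
        rfl
      · rw [show 2*k+1+2 = 2*k+3 from rfl, fib_odd, show 2*k+3+2 = 2*(k+1)+3 from rfl,
          fib_odd (k+1), sig_append, ih (2*k+1) (by omega), ih (2*k+2) (by omega)]
        rfl

theorem sig_injective : ∀ {u v : List Bool}, sig u = sig v → u = v := by
  intro u
  induction u with
  | nil =>
    intro v h
    cases v with
    | nil => rfl
    | cons b v => cases b <;> simp [sig_nil, sig_false, sig_true] at h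
  | cons a u ih =>
    intro v h
    cases v with
    | nil => cases a <;> simp [sig_nil, sig_false, sig_true] at h
    | cons b v =>
      cases a <;> cases b <;>
        simp only [sig_false, sig_true, List.cons.injEq] at h
      · simp at h; exact congrArg _ (ih h)
      · simp at h
      · simp at h
      · simp at h; exact congrArg _ (ih h)

theorem sig_head : ∀ {w : List Bool}, w ≠ [] → ∃ l, sig w = true :: l := by
  intro w hw
  cases w with
  | nil => exact absurd rfl hw
  | cons a w => cases a <;> exact ⟨_, rfl⟩

theorem sig_last : ∀ {w : List Bool}, w ≠ [] → ∃ l, sig w = l ++ [false] := by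
  intro w
  induction w with
  | nil => intro h; exact absurd rfl h
  | cons a w ih =>
    intro _
    rcases eq_or_ne w [] with rfl | hw
    · cases a
      · exact ⟨[true], rfl⟩
      · exact ⟨[true, true], rfl⟩
    · obtain ⟨l, hl⟩ := ih hw
      cases a
      · exact ⟨[true, false] ++ l, by simp [sig_false, hl]⟩
      · exact ⟨[true, true, false] ++ l, by simp [sig_true, hl]⟩

/-! ###  patterns [false,false] and [true,true,true] never occur in sig images -/

theorem sig_no_ff : ∀ (w : List Bool), ¬ [false, false] <:+: sig w := by
  intro w
  induction w with
  | nil => simp [sig_nil]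
  | cons a w ih =>
    intro h
    have hstep : ¬ [false, false] <:+: (false :: sig w) := by
      rw [List.infix_cons_iff]
      rintro (hp | hi)
      · rw [List.cons_prefix_cons] at hp
        rcases eq_or_ne w [] with rfl | hw
        · simpa [sig_nil] using hp.2
        · obtain ⟨l, hl⟩ := sig_head hw
          rw [hl] at hp
          simpa [List.cons_prefix_cons] using hp.2
      · exact ih hi
    cases a
    · rw [sig_false, List.infix_cons_iff] at h
      rcases h with hp | h
      · simp [List.cons_prefix_cons] at hp
      · exact hstep h
    · rw [sig_true, List.infix_cons_iff] at h
      rcases h with hp | h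
      · simp [List.cons_prefix_cons] at hp
      · rw [List.infix_cons_iff] at h
        rcases h with hp | h
        · simp [List.cons_prefix_cons] at hp
        · exact hstep h

theorem sig_no_ttt : ∀ (w : List Bool), ¬ [true, true, true] <:+: sig w := by
  intro w
  induction w with
  | nil => simp [sig_nil]
  | cons a w ih =>
    intro h
    have hstep : ¬ [true, true, true] <:+: (false :: sig w) := by
      rw [List.infix_cons_iff]
      rintro (hp | hi)
      · simp [List.cons_prefix_cons] at hp
      · exact ih hi
    cases a
    · rw [sig_false, List.infix_cons_iff] at h
      rcases h with hp | h
      · simp [List.cons_prefix_cons] at hp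
      · exact hstep h
    · rw [sig_true, List.infix_cons_iff] at h
      rcases h with hp | h
      · simp [List.cons_prefix_cons] at hp
      · rw [List.infix_cons_iff] at h
        rcases h with hp | h
        · simp [List.cons_prefix_cons] at hp
        · exact hstep h



/-! ### lengths -/

theorem flen_pos (m : ℕ) : 0 < (fibWord m).length :=
  List.length_pos_iff.mpr (fib_ne_nil m)

theorem flen_add (m : ℕ) :
    (fibWord (m+2)).length = (fibWord (m+1)).length + (fibWord m).length := by
  rw [fibWord]
  split <;> simp <;> omega

theorem flen_succ_lt : ∀ m, 1 ≤ m → (fibWord m).length < (fibWord (m+1)).length := by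
  intro m hm
  obtain ⟨j, rfl⟩ : ∃ j, m = j + 1 := ⟨m - 1, by omega⟩
  rw [show j+1+1 = j+2 from rfl, flen_add]
  have := flen_pos j
  omega

theorem flen_lt_of_lt {a b : ℕ} (ha : 1 ≤ a) (hab : a < b) :
    (fibWord a).length < (fibWord b).length := by
  induction b with
  | zero => omega
  | succ b ih =>
    rcases Nat.lt_or_ge a b with h | h
    · exact (ih h).trans (flen_succ_lt b (by omega))
    · have : a = b := by omega
      subst this
      exact flen_succ_lt a ha

theorem flen_le_of_le {a b : ℕ} (hab : a ≤ b) :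
    (fibWord a).length ≤ (fibWord b).length := by
  rcases Nat.eq_or_lt_of_le hab with rfl | h
  · exact le_refl _
  · rcases Nat.eq_zero_or_pos a with rfl | ha
    · calc (fibWord 0).length = 1 := rfl
        _ ≤ _ := flen_pos b
    · exact (flen_lt_of_lt ha h).le

/-! ### the bad words h -/

def hWord (m : ℕ) : List Bool :=
  if m % 2 = 0 then fibWord m ++ fibWord (m-2) else fibWord (m-2) ++ fibWord m

theorem hWord_even (k : ℕ) : hWord (2*k+2) = fibWord (2*k+2) ++ fibWord (2*k) := by
  rw [hWord, if_pos (by omega : (2*k+2) % 2 = 0), show 2*k+2-2 = 2*k from by omega]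

theorem hWord_odd (k : ℕ) : hWord (2*k+3) = fibWord (2*k+1) ++ fibWord (2*k+3) := by
  rw [hWord, if_neg (by omega : ¬ (2*k+3) % 2 = 0), show 2*k+3-2 = 2*k+1 from by omega]

theorem hWord2 : hWord 2 = [true, false, false] := rfl
theorem hWord3 : hWord 3 = [true, true, true, false] := rfl

theorem hlen (m : ℕ) (hm : 2 ≤ m) :
    (hWord m).length = (fibWord m).length + (fibWord (m-2)).length := by
  rw [hWord]
  split <;> simp <;> omega

theorem hWord_ne_nil {m : ℕ} (hm : 2 ≤ m) : hWord m ≠ [] := by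
  intro h
  have h1 := congrArg List.length h
  rw [hlen m hm] at h1
  have h2 := flen_pos m
  simp only [List.length_nil] at h1
  omega

theorem sig_hWord (m : ℕ) (hm : 2 ≤ m) : sig (hWord m) = hWord (m+2) := by
  rcases Nat.even_or_odd' m with ⟨k, rfl | rfl⟩
  · obtain ⟨j, rfl⟩ : ∃ j, k = j + 1 := ⟨k - 1, by omega⟩
    rw [show 2*(j+1) = 2*j+2 from rfl, hWord_even, sig_append, sig_fib, sig_fib,
      show 2*j+2+2 = 2*(j+1)+2 from rfl, show 2*j+2 = 2*(j+1) from rfl, hWord_even]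
  · obtain ⟨j, rfl⟩ : ∃ j, k = j + 1 := ⟨k - 1, by omega⟩
    rw [show 2*(j+1)+1 = 2*j+3 from rfl, hWord_odd, sig_append, sig_fib, sig_fib,
      show 2*j+3+2 = 2*(j+1)+3 from rfl, hWord_odd,
      show 2*j+1+2 = 2*(j+1)+1 from rfl]

theorem hlen_lt_succ {m : ℕ} (hm : 2 ≤ m) : (hWord m).length < (hWord (m+1)).length := by
  rw [hlen m hm, hlen (m+1) (by omega)]
  have h1 : (fibWord m).length < (fibWord (m+1)).length := flen_succ_lt m (by omega)
  have h2 : (fibWord (m-2)).length ≤ (fibWord (m+1-2)).length := flen_le_of_le (by omega)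
  omega

theorem hlen_lt {a b : ℕ} (ha : 2 ≤ a) (hab : a < b) :
    (hWord a).length < (hWord b).length := by
  induction b with
  | zero => omega
  | succ b ih =>
    rcases Nat.lt_or_ge a b with h | h
    · exact (ih h).trans (hlen_lt_succ (by omega))
    · have : a = b := by omega
      subst this
      exact hlen_lt_succ ha

/-- crucial: h-words are never Fibonacci words -/
theorem hWord_ne_fib {m : ℕ} (hm : 2 ≤ m) (k : ℕ) : hWord m ≠ fibWord k := by
  intro he
  have hlm : (hWord m).length = (fibWord k).length := congrArg List.length he
  rcases Nat.lt_or_ge m 3 with h3 | h3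
  · have hm2 : m = 2 := by omega
    subst hm2
    rcases Nat.lt_or_ge k 4 with h4 | h4
    · interval_cases k <;> exact absurd he (by decide)
    · have h5 : (fibWord 4).length ≤ (fibWord k).length := flen_le_of_le h4
      have h6 : (fibWord 4).length = 5 := rfl
      rw [hWord2] at hlm
      simp at hlm
      omega
  · have hlow : (fibWord m).length < (hWord m).length := by
      rw [hlen m hm]
      have := flen_pos (m-2)
      omega
    have h2 : (fibWord (m+1)).length = (fibWord m).length + (fibWord (m-1)).length := by
      have e : m + 1 = (m-1) + 2 := by omega
      rw [e, flen_add]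
      congr 3
      omega
    have h1 : (fibWord (m-2)).length < (fibWord (m-1)).length := by
      have e : m - 1 = (m-2) + 1 := by omega
      rw [e]
      exact flen_succ_lt (m-2) (by omega)
    have hhigh : (hWord m).length < (fibWord (m+1)).length := by
      rw [hlen m hm]
      omega
    rcases Nat.lt_or_ge k (m+1) with h | h
    · have : (fibWord k).length ≤ (fibWord m).length := flen_le_of_le (by omega)
      omega
    · have : (fibWord (m+1)).length ≤ (fibWord k).length := flen_le_of_le h
      omega


/-! ### heads and tails -/

theorem fib_head {m : ℕ} (hm : 1 ≤ m) : ∃ l, fibWord m = true :: l := by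
  rcases Nat.lt_or_ge m 3 with h | h
  · interval_cases m
    · exact ⟨[], rfl⟩
    · exact ⟨[false], rfl⟩
  · rw [show m = m-2+2 from by omega, ← sig_fib]
    exact sig_head (fib_ne_nil _)

theorem fib_last {m : ℕ} (hm : 2 ≤ m) : ∃ l, fibWord m = l ++ [false] := by
  rw [show m = m-2+2 from by omega, ← sig_fib]
  exact sig_last (fib_ne_nil _)

theorem hWord_head {m : ℕ} (hm : 2 ≤ m) : ∃ l, hWord m = true :: l := by
  rcases Nat.lt_or_ge m 4 with h | h
  · interval_cases m
    · exact ⟨[false, false], rfl⟩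
    · exact ⟨[true, true, false], rfl⟩
  · rw [show m = m-2+2 from by omega, ← sig_hWord (m-2) (by omega)]
    exact sig_head (hWord_ne_nil (by omega))

theorem hWord_last {m : ℕ} (hm : 2 ≤ m) : ∃ l, hWord m = l ++ [false] := by
  rcases Nat.lt_or_ge m 4 with h | h
  · interval_cases m
    · exact ⟨[true, false], rfl⟩
    · exact ⟨[true, true, true], rfl⟩
  · rw [show m = m-2+2 from by omega, ← sig_hWord (m-2) (by omega)]
    exact sig_last (hWord_ne_nil (by omega))

/-! ### pattern avoidance in fib and h words -/

theorem fib_no_ff (m : ℕ) : ¬ [false, false] <:+: fibWord m := by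
  rcases Nat.lt_or_ge m 2 with h | h
  · intro hi
    have := hi.length_le
    interval_cases m <;> simp [fib0, fib1] at this
  · rw [show m = m-2+2 from by omega, ← sig_fib]
    exact sig_no_ff _

theorem fib_no_ttt (m : ℕ) : ¬ [true, true, true] <:+: fibWord m := by
  rcases Nat.lt_or_ge m 2 with h | h
  · intro hi
    have := hi.length_le
    interval_cases m <;> simp [fib0, fib1] at this
  · rw [show m = m-2+2 from by omega, ← sig_fib]
    exact sig_no_ttt _

theorem hWord_no_ff {m : ℕ} (hm : 3 ≤ m) : ¬ [false, false] <:+: hWord m := by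
  rcases Nat.lt_or_ge m 4 with h | h
  · have : m = 3 := by omega
    subst this
    decide
  · rw [show m = m-2+2 from by omega, ← sig_hWord (m-2) (by omega)]
    exact sig_no_ff _

theorem hWord_no_ttt {m : ℕ} (hm : 4 ≤ m) : ¬ [true, true, true] <:+: hWord m := by
  rw [show m = m-2+2 from by omega, ← sig_hWord (m-2) (by omega)]
  exact sig_no_ttt _

/-! ### desubstitution -/

theorem sig_prefix_decomp : ∀ (w v : List Bool), v <+: sig w →
    ∃ u s, u <+: w ∧ (s = [] ∨ s = [true] ∨ s = [true, true]) ∧ v = sig u ++ s := by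
  intro w
  induction w with
  | nil =>
    intro v hv
    rw [sig_nil, List.prefix_nil] at hv
    exact ⟨[], [], List.nil_prefix, Or.inl rfl, by simp [hv, sig_nil]⟩
  | cons a w ih =>
    intro v hv
    cases a
    · rw [sig_false] at hv
      cases v with
      | nil => exact ⟨[], [], List.nil_prefix, Or.inl rfl, by simp [sig_nil]⟩
      | cons x v1 =>
        rw [List.cons_prefix_cons] at hv
        obtain ⟨rfl, hv1⟩ := hv
        cases v1 with
        | nil => exact ⟨[], [true], List.nil_prefix, Or.inr (Or.inl rfl), by simp [sig_nil]⟩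
        | cons z v2 =>
          rw [List.cons_prefix_cons] at hv1
          obtain ⟨rfl, hv2⟩ := hv1
          obtain ⟨u, s, hu, hs, rfl⟩ := ih v2 hv2
          exact ⟨false :: u, s, List.cons_prefix_cons.mpr ⟨rfl, hu⟩, hs, by simp [sig_false]⟩
    · rw [sig_true] at hv
      cases v with
      | nil => exact ⟨[], [], List.nil_prefix, Or.inl rfl, by simp [sig_nil]⟩
      | cons x v1 =>
        rw [List.cons_prefix_cons] at hv
        obtain ⟨rfl, hv1⟩ := hv
        cases v1 with
        | nil => exact ⟨[], [true], List.nil_prefix, Or.inr (Or.inl rfl), by simp [sig_nil]⟩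
        | cons y v2 =>
          rw [List.cons_prefix_cons] at hv1
          obtain ⟨rfl, hv2⟩ := hv1
          cases v2 with
          | nil =>
            exact ⟨[], [true, true], List.nil_prefix, Or.inr (Or.inr rfl), by simp [sig_nil]⟩
          | cons z v3 =>
            rw [List.cons_prefix_cons] at hv2
            obtain ⟨rfl, hv3⟩ := hv2
            obtain ⟨u, s, hu, hs, rfl⟩ := ih v3 hv3
            exact ⟨true :: u, s, List.cons_prefix_cons.mpr ⟨rfl, hu⟩, hs, by simp [sig_true]⟩

theorem sig_infix_decomp : ∀ (w v : List Bool), v <:+: sig w →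
    ∃ p u s, (p = [] ∨ p = [false] ∨ p = [true, false]) ∧
      (s = [] ∨ s = [true] ∨ s = [true, true]) ∧ u <:+: w ∧ v = p ++ sig u ++ s := by
  intro w
  induction w with
  | nil =>
    intro v hv
    rw [sig_nil] at hv
    rw [List.infix_nil] at hv
    exact ⟨[], [], [], Or.inl rfl, Or.inl rfl, List.infix_refl _, by simp [hv, sig_nil]⟩
  | cons a w ih =>
    intro v hv
    -- helper to lift IH results
    have lift : ∀ {u : List Bool}, u <:+: w → u <:+: a :: w := fun hu =>
      hu.trans (List.suffix_cons a w).isInfix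
    have liftp : ∀ {u : List Bool}, u <+: w → u <:+: a :: w := fun hu =>
      lift hu.isInfix
    -- case analysis on the block
    cases a
    · rw [sig_false, List.infix_cons_iff] at hv
      rcases hv with hp | hv
      · -- prefix of the whole sig (false :: w)
        obtain ⟨u, s, hu, hs, rfl⟩ := sig_prefix_decomp (false :: w) v (by rw [sig_false]; exact hp)
        exact ⟨[], u, s, Or.inl rfl, hs, hu.isInfix, by simp⟩
      · rw [List.infix_cons_iff] at hv
        rcases hv with hp | hv
        · -- v <+: false :: sig w
          cases v with
          | nil => exact ⟨[], [], [], Or.inl rfl, Or.inl rfl, List.nil_infix, by simp [sig_nil]⟩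
          | cons z v2 =>
            rw [List.cons_prefix_cons] at hp
            obtain ⟨rfl, hv2⟩ := hp
            obtain ⟨u, s, hu, hs, rfl⟩ := sig_prefix_decomp w v2 hv2
            exact ⟨[false], u, s, Or.inr (Or.inl rfl), hs, liftp hu, by simp⟩
        · obtain ⟨p, u, s, hps, hs, hu, rfl⟩ := ih v hv
          exact ⟨p, u, s, hps, hs, lift hu, rfl⟩
    · rw [sig_true, List.infix_cons_iff] at hv
      rcases hv with hp | hv
      · obtain ⟨u, s, hu, hs, rfl⟩ := sig_prefix_decomp (true :: w) v (by rw [sig_true]; exact hp)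
        exact ⟨[], u, s, Or.inl rfl, hs, hu.isInfix, by simp⟩
      · rw [List.infix_cons_iff] at hv
        rcases hv with hp | hv
        · -- v <+: true :: false :: sig w
          cases v with
          | nil => exact ⟨[], [], [], Or.inl rfl, Or.inl rfl, List.nil_infix, by simp [sig_nil]⟩
          | cons x v1 =>
            rw [List.cons_prefix_cons] at hp
            obtain ⟨rfl, hv1⟩ := hp
            cases v1 with
            | nil =>
              exact ⟨[], [], [true], Or.inl rfl, Or.inr (Or.inl rfl), List.nil_infix,
                by simp [sig_nil]⟩
            | cons z v2 =>
              rw [List.cons_prefix_cons] at hv1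
              obtain ⟨rfl, hv2⟩ := hv1
              obtain ⟨u, s, hu, hs, rfl⟩ := sig_prefix_decomp w v2 hv2
              exact ⟨[true, false], u, s, Or.inr (Or.inr rfl), hs, liftp hu, by simp⟩
        · rw [List.infix_cons_iff] at hv
          rcases hv with hp | hv
          · cases v with
            | nil => exact ⟨[], [], [], Or.inl rfl, Or.inl rfl, List.nil_infix, by simp [sig_nil]⟩
            | cons z v2 =>
              rw [List.cons_prefix_cons] at hp
              obtain ⟨rfl, hv2⟩ := hp
              obtain ⟨u, s, hu, hs, rfl⟩ := sig_prefix_decomp w v2 hv2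
              exact ⟨[false], u, s, Or.inr (Or.inl rfl), hs, liftp hu, by simp⟩
          · obtain ⟨p, u, s, hps, hs, hu, rfl⟩ := ih v hv
            exact ⟨p, u, s, hps, hs, lift hu, rfl⟩

theorem last_eq_of_concat_eq {l l' : List Bool} {a b : Bool} (h : l ++ [a] = l' ++ [b]) :
    a = b := by
  have h1 : (l ++ [a]).getLast? = (l' ++ [b]).getLast? := by rw [h]
  rw [List.getLast?_concat, List.getLast?_concat] at h1
  exact Option.some.inj h1

/-- key desubstitution step for h-words -/
theorem hWord_sig_desub {k : ℕ} (hk : 4 ≤ k) {w : List Bool} (h : hWord k <:+: sig w) :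
    hWord (k-2) <:+: w := by
  obtain ⟨p, u, s, hps, hs, hu, he⟩ := sig_infix_decomp w _ h
  -- hWord k = sig (hWord (k-2))
  have hsig : hWord k = sig (hWord (k-2)) := by
    rw [sig_hWord (k-2) (by omega), show k-2+2 = k from by omega]
  obtain ⟨l0, hl0⟩ := hWord_head (show 2 ≤ k-2 by omega)
  have hk2 : sig (hWord (k-2)) = true :: true :: false :: sig l0 := by
    rw [hl0, sig_true]
  -- p must be []
  have hp : p = [] := by
    rcases hps with rfl | rfl | rfl
    · rfl
    · exfalso
      rw [hsig, hk2] at he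
      simp at he
    · exfalso
      rw [hsig, hk2] at he
      simp at he
  subst hp
  simp only [List.nil_append] at he
  -- s must be []
  have hslast : ∃ l, hWord k = l ++ [false] := hWord_last (by omega)
  have hs0 : s = [] := by
    obtain ⟨l, hl⟩ := hslast
    rcases hs with rfl | rfl | rfl
    · rfl
    · exfalso
      rw [hl] at he
      exact absurd (last_eq_of_concat_eq he) (by simp)
    · exfalso
      rw [hl] at he
      have : l ++ [false] = (sig u ++ [true]) ++ [true] := by
        rw [he]; simp
      exact absurd (last_eq_of_concat_eq this) (by simp)
  subst hs0
  simp only [List.append_nil] at he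
  -- conclude
  have : hWord (k-2) = u := sig_injective (by rw [← hsig, he])
  rw [this]
  exact hu

/-- h-words are not factors of Fibonacci words -/
theorem hWord_not_infix_fib : ∀ k, 2 ≤ k → ∀ m, ¬ hWord k <:+: fibWord m := by
  intro k
  induction k using Nat.strong_induction_on with
  | _ k ih =>
    intro hk m h
    rcases Nat.lt_or_ge k 4 with h4 | h4
    · interval_cases k
      · exact fib_no_ff m ((by decide : [false,false] <:+: hWord 2).trans h)
      · exact fib_no_ttt m ((by decide : [true,true,true] <:+: hWord 3).trans h)
    · -- k ≥ 4 : m ≥ 2 by lengths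
      have hlen2 : 2 ≤ (hWord k).length := by
        rw [hlen k (by omega)]
        have := flen_pos k
        have := flen_pos (k-2)
        omega
      have hm : 2 ≤ m := by
        by_contra hm
        have := h.length_le
        interval_cases m <;> simp [fib0, fib1] at this <;> omega
      rw [show m = m-2+2 from by omega, ← sig_fib] at h
      exact ih (k-2) (by omega) (by omega) (m-2) (hWord_sig_desub h4 h)

/-- h-words are not proper factors of h-words -/
theorem hWord_not_proper_infix_hWord : ∀ k m, 2 ≤ k → k < m → ¬ hWord k <:+: hWord m := by
  intro k
  induction k using Nat.strong_induction_on with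
  | _ k ih =>
    intro m hk hkm h
    rcases Nat.lt_or_ge k 4 with h4 | h4
    · interval_cases k
      · exact hWord_no_ff (by omega) ((by decide : [false,false] <:+: hWord 2).trans h)
      · exact hWord_no_ttt (by omega) ((by decide : [true,true,true] <:+: hWord 3).trans h)
    · have hm5 : 5 ≤ m := by omega
      rw [show m = m-2+2 from by omega, ← sig_hWord (m-2) (by omega)] at h
      exact ih (k-2) (by omega) (m-2) (by omega) (by omega) (hWord_sig_desub h4 h)


/-! ### prefix and suffix chains -/

theorem fib_prefix_odd : ∀ {a b : ℕ}, a ≤ b → fibWord (2*a+1) <+: fibWord (2*b+1) := by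
  intro a b hab
  induction b with
  | zero =>
    have : a = 0 := by omega
    subst this; exact List.prefix_refl _
  | succ b ih =>
    rcases Nat.lt_or_ge a (b+1) with h | h
    · have h1 : fibWord (2*a+1) <+: fibWord (2*b+1) := ih (by omega)
      have h2 : fibWord (2*b+1) <+: fibWord (2*(b+1)+1) := by
        rw [show 2*(b+1)+1 = 2*b+3 from by omega, fib_odd]
        exact List.prefix_append _ _
      exact h1.trans h2
    · have : a = b+1 := by omega
      subst this; exact List.prefix_refl _

theorem fib_suffix_even : ∀ {a b : ℕ}, a ≤ b → fibWord (2*a) <:+ fibWord (2*b) := by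
  intro a b hab
  induction b with
  | zero =>
    have : a = 0 := by omega
    subst this; exact List.suffix_refl _
  | succ b ih =>
    rcases Nat.lt_or_ge a (b+1) with h | h
    · have h1 : fibWord (2*a) <:+ fibWord (2*b) := ih (by omega)
      have h2 : fibWord (2*b) <:+ fibWord (2*(b+1)) := by
        rw [show 2*(b+1) = 2*b+2 from by omega, fib_even]
        exact List.suffix_append _ _
      exact h1.trans h2
    · have : a = b+1 := by omega
      subst this; exact List.suffix_refl _

/-! ### fib words are Lyndon -/

theorem fib_lyndon : ∀ m, IsLyndon (fibWord m) := by
  intro m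
  induction m using Nat.strong_induction_on with
  | _ m ih =>
    match m with
    | 0 => exact lyndon_singleton false
    | 1 => exact lyndon_singleton true
    | (n+2) =>
      rcases Nat.even_or_odd' n with ⟨k, rfl | rfl⟩
      · -- even : f(2k+2) = f(2k+1) ++ f(2k)
        rw [show 2*k+2 = 2*k+2 from rfl, fib_even]
        refine lyndon_append (ih (2*k+1) (by omega)) (ih (2*k) (by omega)) ?_
        rcases Nat.eq_zero_or_pos k with rfl | hk
        · rw [fib0, fib1]
          exact lexLt_cons.mpr (Or.inl (by simp))
        · obtain ⟨j, rfl⟩ : ∃ j, k = j+1 := ⟨k-1, by omega⟩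
          have hsuf : fibWord (2*j) <:+ fibWord (2*j+2) := by
            have := fib_suffix_even (show j ≤ j+1 by omega)
            rwa [show 2*(j+1) = 2*j+2 from by omega] at this
          have hne : fibWord (2*j) ≠ fibWord (2*j+2) := by
            intro he
            have h1 := congrArg List.length he
            rw [flen_add (2*j)] at h1
            have := flen_pos (2*j+1)
            omega
          have hly : IsLyndon (fibWord (2*j+2)) := ih (2*j+2) (by omega)
          have h3 : LexLt (fibWord (2*j)) (fibWord (2*j+2)) :=
            lyndonSuffixLt hly hsuf (fib_ne_nil _) hne
          show LexLt (fibWord (2*j+2)) (fibWord (2*j+3))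
          rw [fib_odd j]
          conv_lhs => rw [fib_even j]
          exact lexLt_append_iff.mpr h3
      · -- odd : f(2k+3) = f(2k+1) ++ f(2k+2)
        rw [show 2*k+1+2 = 2*k+3 from by omega, fib_odd]
        refine lyndon_append (ih (2*k+1) (by omega)) (ih (2*k+2) (by omega)) ?_
        refine prefix_lexLt ⟨fibWord (2*k), (fib_even k).symm⟩ ?_
        intro he
        have h1 := congrArg List.length he
        rw [flen_add (2*k)] at h1
        have := flen_pos (2*k)
        omega

/-! ### order relations between fib words -/

theorem fib_odd_decr {a b : ℕ} (hab : a < b) :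
    LexLt (fibWord (2*b+1)) (fibWord (2*a+1)) := by
  refine prefix_lexLt (fib_prefix_odd hab.le) ?_
  intro he
  have := congrArg List.length he
  have := flen_lt_of_lt (show 1 ≤ 2*a+1 by omega) (show 2*a+1 < 2*b+1 by omega)
  omega

theorem fib_even_incr {a b : ℕ} (hab : a < b) :
    LexLt (fibWord (2*a)) (fibWord (2*b)) := by
  refine lyndonSuffixLt (fib_lyndon (2*b)) (fib_suffix_even hab.le) (fib_ne_nil _) ?_
  intro he
  have h1 := congrArg List.length he
  have h5 : (fibWord (2*a)).length < (fibWord (2*b)).length := by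
    rcases Nat.eq_zero_or_pos a with rfl | ha
    · have h0 : (fibWord (2*0)).length = 1 := rfl
      have h6 : (fibWord 1).length = 1 := rfl
      have h7 := flen_lt_of_lt (show 1 ≤ 1 from le_refl _) (show 1 < 2*b by omega)
      omega
    · exact flen_lt_of_lt (by omega) (by omega)
  omega

theorem fib_even_lt_odd (a b : ℕ) : LexLt (fibWord (2*a)) (fibWord (2*b+1)) := by
  set R := max a (b+1) with hR
  obtain ⟨r, hr⟩ : ∃ r, R = r + 1 := ⟨R-1, by omega⟩
  have h2 : LexLt (fibWord (2*R)) (fibWord (2*r+1)) := by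
    rw [hr, show 2*(r+1) = 2*r+2 from by omega]
    refine prefix_lexLt ⟨fibWord (2*r), (fib_even r).symm⟩ ?_
    intro he
    have := congrArg List.length he
    rw [flen_add (2*r)] at this
    have := flen_pos (2*r)
    omega
  have h1 : LexLt (fibWord (2*a)) (fibWord (2*r+1)) := by
    rcases Nat.lt_or_ge a R with h | h
    · exact lexLt_trans (fib_even_incr h) h2
    · have : a = R := by omega
      rw [this]; exact h2
  rcases Nat.lt_or_ge b r with h | h
  · exact lexLt_trans h1 (fib_odd_decr h)
  · have : b = r := by omega
    subst this
    exact h1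

/-! ### h words are Lyndon -/

theorem hWord_lyndon {m : ℕ} (hm : 2 ≤ m) : IsLyndon (hWord m) := by
  rcases Nat.even_or_odd' m with ⟨k, rfl | rfl⟩
  · obtain ⟨j, rfl⟩ : ∃ j, k = j+1 := ⟨k-1, by omega⟩
    rw [show 2*(j+1) = 2*j+2 from by omega, hWord_even]
    exact lyndon_append (fib_lyndon _) (fib_lyndon _)
      (by simpa [show 2*(j+1) = 2*j+2 from by omega] using fib_even_incr (show j < j+1 by omega))
  · obtain ⟨j, rfl⟩ : ∃ j, k = j+1 := ⟨k-1, by omega⟩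
    rw [show 2*(j+1)+1 = 2*j+3 from by omega, hWord_odd]
    exact lyndon_append (fib_lyndon _) (fib_lyndon _)
      (by simpa [show 2*(j+1)+1 = 2*j+3 from by omega] using fib_odd_decr (show j < j+1 by omega))

/-! ### the trichotomy for products of two fib words -/

theorem decomp_cases {i j : ℕ} (hlt : LexLt (fibWord j) (fibWord i)) :
    (∃ k, (k ≤ i + 1 ∨ k ≤ j + 1) ∧ fibWord i ++ fibWord j = fibWord k) ∨
    (∃ m, 2 ≤ m ∧ (m ≤ i ∨ m ≤ j) ∧ fibWord i ++ fibWord j = hWord m) ∨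
    (∃ m, 2 ≤ m ∧ hWord m <:+: fibWord i ++ fibWord j ∧
      (hWord m).length < (fibWord i ++ fibWord j).length) := by
  rcases Nat.even_or_odd' i with ⟨a, rfl | rfl⟩ <;> rcases Nat.even_or_odd' j with ⟨b, rfl | rfl⟩
  · -- i = 2a, j = 2b : must have b < a
    have hba : b < a := by
      rcases lt_trichotomy a b with h | rfl | h
      · exact absurd hlt (lexLt_asymm (fib_even_incr h))
      · exact absurd hlt (lexLt_irrefl _)
      · exact h
    rcases Nat.lt_or_ge b (a-1) with h | h
    · -- far case : b ≤ a - 2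
      right; right
      refine ⟨2*b+2, by omega, ?_, ?_⟩
      · obtain ⟨pre, hpre⟩ := fib_suffix_even (show b+1 ≤ a by omega)
        rw [show 2*(b+1) = 2*b+2 from by omega] at hpre
        refine (List.IsSuffix.isInfix ⟨pre, ?_⟩)
        rw [hWord_even, ← List.append_assoc, hpre]
      · rw [hlen _ (by omega), show 2*b+2-2 = 2*b from by omega]
        have h1 : (fibWord (2*b+2)).length < (fibWord (2*a)).length :=
          flen_lt_of_lt (by omega) (by omega)
        simp
        omega
    · -- adjacent : b = a - 1, v = hWord (2a)
      have hb : b = a - 1 := by omega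
      right; left
      refine ⟨2*a, by omega, Or.inl (by omega), ?_⟩
      obtain ⟨c, rfl⟩ : ∃ c, a = c+1 := ⟨a-1, by omega⟩
      rw [show 2*(c+1) = 2*c+2 from by omega, hWord_even,
        show b = c from by omega]
  · -- i = 2a, j = 2b+1 : impossible
    exact absurd hlt (lexLt_asymm (fib_even_lt_odd a b))
  · -- i = 2a+1, j = 2b
    rcases Nat.lt_or_ge b (a+1) with hb | hb
    · rcases Nat.lt_or_ge b a with hb2 | hb2
      · -- b < a : suffix far/adjacent case via hWord (2b+2)
        right; right
        obtain ⟨c, rfl⟩ : ∃ c, a = c+1 := ⟨a-1, by omega⟩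
        refine ⟨2*b+2, by omega, ?_, ?_⟩
        · obtain ⟨pre, hpre⟩ := fib_suffix_even (show b+1 ≤ c+1 by omega)
          rw [show 2*(b+1) = 2*b+2 from by omega, show 2*(c+1) = 2*c+2 from by omega] at hpre
          refine (List.IsSuffix.isInfix ⟨fibWord (2*c+1) ++ pre, ?_⟩)
          rw [hWord_even, show 2*(c+1)+1 = 2*c+3 from by omega, fib_odd, ← hpre]
          simp
        · rw [hlen _ (by omega), show 2*b+2-2 = 2*b from by omega]
          have h1 : (fibWord (2*b+2)).length < (fibWord (2*(c+1)+1)).length :=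
            flen_lt_of_lt (by omega) (by omega)
          simp
          omega
      · -- b = a : v = f(2a+1) ++ f(2a) = f(2a+2)
        have : b = a := by omega
        subst this
        left
        exact ⟨2*b+2, Or.inl (by omega), (fib_even b).symm⟩
    · rcases Nat.lt_or_ge b (a+2) with hb2 | hb2
      · -- b = a+1 : v = f(2a+1) ++ f(2a+2) = f(2a+3)
        have : b = a+1 := by omega
        subst this
        left
        refine ⟨2*a+3, Or.inr (by omega), ?_⟩
        rw [show 2*(a+1) = 2*a+2 from by omega, fib_odd]
      · -- b ≥ a+2 : prefix far case via hWord (2a+3)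
        right; right
        refine ⟨2*a+3, by omega, ?_, ?_⟩
        · -- f(2a+3) is a prefix of f(2b-1), hence of f(2b)
          obtain ⟨c, rfl⟩ : ∃ c, b = c+1 := ⟨b-1, by omega⟩
          obtain ⟨rest, hrest⟩ := fib_prefix_odd (show a+1 ≤ c by omega)
          rw [show 2*(a+1)+1 = 2*a+3 from by omega] at hrest
          refine List.IsPrefix.isInfix ⟨rest ++ fibWord (2*c), ?_⟩
          rw [hWord_odd, show 2*(c+1) = 2*c+2 from by omega, fib_even, ← hrest]
          simp
        · rw [hlen _ (by omega), show 2*a+3-2 = 2*a+1 from by omega]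
          have h1 : (fibWord (2*a+3)).length < (fibWord (2*b)).length :=
            flen_lt_of_lt (by omega) (by omega)
          simp
          omega
  · -- i = 2a+1, j = 2b+1 : must have a < b
    have hab : a < b := by
      rcases lt_trichotomy a b with h | rfl | h
      · exact h
      · exact absurd hlt (lexLt_irrefl _)
      · exact absurd hlt (lexLt_asymm (fib_odd_decr h))
    rcases Nat.lt_or_ge b (a+2) with hb | hb
    · -- b = a+1 : v = hWord (2a+3)
      have : b = a+1 := by omega
      subst this
      right; left
      refine ⟨2*a+3, by omega, Or.inr (by omega), ?_⟩
      rw [hWord_odd, show 2*(a+1)+1 = 2*a+3 from by omega]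
    · -- b ≥ a+2 : prefix far case
      right; right
      refine ⟨2*a+3, by omega, ?_, ?_⟩
      · obtain ⟨rest, hrest⟩ := fib_prefix_odd (show a+1 ≤ b by omega)
        rw [show 2*(a+1)+1 = 2*a+3 from by omega] at hrest
        refine List.IsPrefix.isInfix ⟨rest, ?_⟩
        rw [hWord_odd, ← hrest]
        simp
      · rw [hlen _ (by omega), show 2*a+3-2 = 2*a+1 from by omega]
        have h1 : (fibWord (2*a+3)).length < (fibWord (2*b+1)).length :=
          flen_lt_of_lt (by omega) (by omega)
        simp
        omega


/-! ### KEY: classification of Lyndon factors of fib words and h words -/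

theorem key : ∀ (n : ℕ) (v : List Bool), v.length ≤ n → IsLyndon v →
    (∀ m, v <:+: fibWord m → ∃ k, v = fibWord k) ∧
    (∀ m, 2 ≤ m → v <:+: hWord m → v ≠ hWord m → ∃ k, v = fibWord k) := by
  intro n
  induction n with
  | zero =>
    intro v hl hv
    exact absurd (List.length_eq_zero_iff.mp (by omega)) hv.1
  | succ n ih =>
    intro v hl hv
    rcases Nat.lt_or_ge v.length 2 with h2 | h2
    · have h1 : v.length = 1 := by
        have h0 : v ≠ [] := hv.1
        have := List.length_pos_iff.mpr h0
        omega
      obtain ⟨a, rfl⟩ := List.length_eq_one_iff.mp h1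
      cases a
      · exact ⟨fun m _ => ⟨0, rfl⟩, fun m _ _ _ => ⟨0, rfl⟩⟩
      · exact ⟨fun m _ => ⟨1, rfl⟩, fun m _ _ _ => ⟨1, rfl⟩⟩
    · obtain ⟨u, w, rfl, hune, hwne, hul, hwl, hlt⟩ := lyndon_factorization hv h2
      have hupos : 0 < u.length := List.length_pos_iff.mpr hune
      have hwpos : 0 < w.length := List.length_pos_iff.mpr hwne
      have hlen_uw : (u ++ w).length = u.length + w.length := by simp
      have hu_inf : u <:+: u ++ w := (List.prefix_append u w).isInfix
      have hw_inf : w <:+: u ++ w := (List.suffix_append u w).isInfix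
      constructor
      · intro m hinf
        obtain ⟨i, rfl⟩ := (ih u (by omega) hul).1 m (hu_inf.trans hinf)
        obtain ⟨j, rfl⟩ := (ih w (by omega) hwl).1 m (hw_inf.trans hinf)
        rcases decomp_cases hlt with ⟨k, -, hk⟩ | ⟨m', hm', -, he⟩ | ⟨m', hm', hinf', hlen'⟩
        · exact ⟨k, hk⟩
        · exact absurd (he ▸ hinf) (hWord_not_infix_fib m' hm' m)
        · exfalso
          obtain ⟨k, hk⟩ := (ih (hWord m') (by omega) (hWord_lyndon hm')).1 m
            (hinf'.trans hinf)
          exact hWord_ne_fib hm' k hk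
      · intro m hm hinf hne
        obtain ⟨i, rfl⟩ := (ih u (by omega) hul).2 m hm (hu_inf.trans hinf) (by
          intro he
          have := congrArg List.length he
          have := hinf.length_le
          omega)
        obtain ⟨j, rfl⟩ := (ih w (by omega) hwl).2 m hm (hw_inf.trans hinf) (by
          intro he
          have := congrArg List.length he
          have := hinf.length_le
          omega)
        rcases decomp_cases hlt with ⟨k, -, hk⟩ | ⟨m', hm', -, he⟩ | ⟨m', hm', hinf', hlen'⟩
        · exact ⟨k, hk⟩
        · exfalso
          rcases lt_trichotomy m' m with h | rfl | h
          · exact hWord_not_proper_infix_hWord m' m hm' h (he ▸ hinf)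
          · exact hne he
          · have h1 : (hWord m).length < (hWord m').length := hlen_lt hm h
            have h2 := (he ▸ hinf : hWord m' <:+: hWord m).length_le
            omega
        · exfalso
          have hproper : hWord m' ≠ hWord m := by
            intro he
            have h1 := congrArg List.length he
            have h2 := hinf.length_le
            omega
          obtain ⟨k, hk⟩ := (ih (hWord m') (by omega) (hWord_lyndon hm')).2 m hm
            (hinf'.trans hinf) hproper
          exact hWord_ne_fib hm' k hk


/-! ### final helpers -/

theorem fib_ne_fib_of_lt {m p : ℕ} (hmp : m < p) (hp : 2 ≤ p) : fibWord p ≠ fibWord m := by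
  intro he
  have h1 := congrArg List.length he
  rcases Nat.eq_zero_or_pos m with rfl | hm
  · have h2 : (fibWord 0).length = 1 := rfl
    have h3 : (fibWord 2).length = 2 := rfl
    have := flen_le_of_le hp
    omega
  · have := flen_lt_of_lt hm hmp
    omega

theorem hlen_lt_flen_succ {m : ℕ} (hm : 3 ≤ m) :
    (hWord m).length < (fibWord (m+1)).length := by
  rw [hlen m (by omega)]
  have h2 : (fibWord (m+1)).length = (fibWord m).length + (fibWord (m-1)).length := by
    rw [show m+1 = (m-1)+2 from by omega, flen_add]
    congr 3
    omega
  have h1 : (fibWord (m-2)).length < (fibWord (m-1)).length := by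
    rw [show m-1 = (m-2)+1 from by omega]
    exact flen_succ_lt (m-2) (by omega)
  omega

end FibAux

open FibAux

theorem fibWords_initial_closed (p : ℕ) (hp : 2 ≤ p) :
    IsClosedSet {w : List Bool | ∃ m < p, w = fibWord m} ∧
    (Phi {w : List Bool | ∃ m < p, w = fibWord m}).ncard = p - 1 := by
  constructor
  · refine ⟨?_, ?_, ?_⟩
    · rintro u ⟨m, -, rfl⟩
      exact fib_lyndon m
    · intro a
      cases a
      · exact ⟨0, by omega, rfl⟩
      · exact ⟨1, by omega, rfl⟩
    · rintro w ⟨m, hmp, rfl⟩ v hvl hinf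
      obtain ⟨k, rfl⟩ := (key v.length v le_rfl hvl).1 m hinf
      rcases Nat.lt_or_ge k 2 with hk2 | hk2
      · exact ⟨k, by omega, rfl⟩
      · refine ⟨k, ?_, rfl⟩
        have hle := hinf.length_le
        by_contra hkp
        have hkm : m < k := by omega
        rcases Nat.eq_zero_or_pos m with rfl | hm1
        · have h4 : (fibWord 2).length ≤ (fibWord k).length := flen_le_of_le hk2
          have h0 : (fibWord 0).length = 1 := rfl
          have h2 : (fibWord 2).length = 2 := rfl
          omega
        · have := flen_lt_of_lt hm1 hkm
          omega
  · have hset : Phi {w : List Bool | ∃ m < p, w = fibWord m}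
        = insert (fibWord p) (hWord '' Set.Ico 2 p) := by
      ext v
      constructor
      · rintro ⟨hvl, hvnU, hfac⟩
        rcases Nat.lt_or_ge v.length 2 with h2 | h2
        · exfalso
          have h1 : v.length = 1 := by
            have h0 : v ≠ [] := hvl.1
            have := List.length_pos_iff.mpr h0
            omega
          obtain ⟨a, rfl⟩ := List.length_eq_one_iff.mp h1
          cases a
          · exact hvnU ⟨0, by omega, rfl⟩
          · exact hvnU ⟨1, by omega, rfl⟩
        · obtain ⟨u, w, rfl, hune, hwne, hul, hwl, hlt⟩ := lyndon_factorization hvl h2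
          have hu_inf : u <:+: u ++ w := (List.prefix_append u w).isInfix
          have hw_inf : w <:+: u ++ w := (List.suffix_append u w).isInfix
          have hneu : u ≠ u ++ w := fun he => hwne (List.append_right_eq_self.mp he.symm)
          have hnew : w ≠ u ++ w := fun he => hune (List.self_eq_append_left.mp he)
          obtain ⟨i, hip, rfl⟩ := hfac u hul hu_inf hneu
          obtain ⟨j, hjp, rfl⟩ := hfac w hwl hw_inf hnew
          rcases decomp_cases hlt with ⟨k, hkb, hk⟩ | ⟨m', hm', hmb, he⟩ |
            ⟨m', hm', hinf', hlen'⟩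
          · have hkp : ¬ k < p := fun h => hvnU ⟨k, h, hk⟩
            have hkq : k = p := by omega
            subst hkq
            exact Set.mem_insert_iff.mpr (Or.inl hk)
          · refine Set.mem_insert_iff.mpr (Or.inr ⟨m', ?_, he.symm⟩)
            exact Set.mem_Ico.mpr ⟨hm', by omega⟩
          · exfalso
            have hproper : hWord m' ≠ fibWord i ++ fibWord j := by
              intro he
              have := congrArg List.length he
              omega
            obtain ⟨k, -, hk⟩ := hfac (hWord m') (hWord_lyndon hm') hinf' hproper
            exact hWord_ne_fib hm' k hk
      · intro hv
        rcases Set.mem_insert_iff.mp hv with rfl | ⟨m', hm', rfl⟩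
        · refine ⟨fib_lyndon p, ?_, ?_⟩
          · rintro ⟨m, hmp, he2⟩
            exact fib_ne_fib_of_lt hmp hp he2
          · intro w' hw'l hinf hne
            obtain ⟨k, rfl⟩ := (key w'.length w' le_rfl hw'l).1 p hinf
            have hle := hinf.length_le
            refine ⟨k, ?_, rfl⟩
            by_contra hkp
            rcases Nat.lt_or_ge p k with h | h
            · have := flen_lt_of_lt (by omega) h
              omega
            · exact hne (by rw [show k = p from by omega])
        · obtain ⟨hm'2, hm'p⟩ := Set.mem_Ico.mp hm'
          refine ⟨hWord_lyndon hm'2, ?_, ?_⟩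
          · rintro ⟨m, -, he2⟩
            exact hWord_ne_fib hm'2 m he2
          · intro w' hw'l hinf hne
            obtain ⟨k, rfl⟩ := (key w'.length w' le_rfl hw'l).2 m' hm'2 hinf hne
            have hle := hinf.length_le
            refine ⟨k, ?_, rfl⟩
            rcases Nat.lt_or_ge m' 3 with h3 | h3
            · -- m' = 2
              have hm'eq : m' = 2 := by omega
              subst hm'eq
              have hh2 : (hWord 2).length = 3 := rfl
              have hk3 : k ≤ 2 := by
                by_contra hk3
                rcases Nat.lt_or_ge k 4 with h4 | h4
                · have hkeq : k = 3 := by omega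
                  subst hkeq
                  have he3 : fibWord 3 = hWord 2 := hinf.eq_of_length (by rw [hh2]; rfl)
                  exact hWord_ne_fib (le_refl 2) 3 he3.symm
                · have h5 : (fibWord 4).length ≤ (fibWord k).length := flen_le_of_le h4
                  have h6 : (fibWord 4).length = 5 := rfl
                  omega
              omega
            · -- m' ≥ 3
              have hbet := hlen_lt_flen_succ h3
              by_contra hkp
              have h7 : (fibWord (m'+1)).length ≤ (fibWord k).length :=
                flen_le_of_le (by omega)
              omega
    rw [hset]
    have hfin : (hWord '' Set.Ico 2 p).Finite := (Set.finite_Ico 2 p).image _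
    have hnm : fibWord p ∉ hWord '' Set.Ico 2 p := by
      rintro ⟨m', hm', he⟩
      exact hWord_ne_fib (Set.mem_Ico.mp hm').1 p he
    have hinj : Set.InjOn hWord (Set.Ico 2 p) := by
      intro a ha b hb he
      have ha2 := (Set.mem_Ico.mp ha).1
      have hb2 := (Set.mem_Ico.mp hb).1
      rcases lt_trichotomy a b with h | h | h
      · exact absurd (congrArg List.length he) (by have := hlen_lt ha2 h; omega)
      · exact h
      · exact absurd (congrArg List.length he) (by have := hlen_lt hb2 h; omega)
    rw [Set.ncard_insert_of_notMem hnm hfin, Set.ncard_image_of_injOn hinj,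
      ← Finset.coe_Ico, Set.ncard_coe_finset, Nat.card_Ico]
    omega
end
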